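/- arXiv:1110.5513 — 7 statements merged into one kernel-verified Lean document; each statement's English description precedes it below -/
import Mathlib

section
/- There exists a constant c > 0 such that for every integer n ≥ 2 and every univariate real polynomial p of degree at most n, the supremum of |p| over the interval [-1,1] is at most c·(log n) times the maximum of |p| over the set C_n = {cos(kπ/n) : k = 0, 1, ..., n} of n+1 Chebyshev–Lobatto points. (In the terminology of weakly admissible meshes: the Chebyshev–Lobatto points form a one-dimensional WAM for [-1,1] with constant C(A_n) = O(log n).) -/
/-!
Write `x = cos θ` with `θ ∈ [0, π]`. For a polynomial `p` of degree at most `n`, `θ ↦ p (cos θ)`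
is a cosine polynomial of degree at most `n`, and discrete orthogonality of `cos (i x)` on the
`2n` equispaced angles `x_k = kπ/n` gives the trigonometric interpolation formula
`n p(cos θ) = ∑_{k < 2n} p(cos x_k) D*_n(θ - x_k)` with the modified Dirichlet kernel `D*_n`.
Since `cos x_k = cos x_{2n-k}`, all values involved are Chebyshev–Lobatto values, so
`|p(x)| ≤ M · (1/n) ∑_k |D*_n(θ - x_k)|`. The closed form `D*_n(φ) = sin (nφ) / (2 tan (φ/2))`
gives `|D*_n(φ)| ≤ π / (2|φ|)` on `[-π, π]`, so away from the two grid points nearest to `θ`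
the kernel values are dominated by `n/(2j)`, and the sum is `O(n log n)`.
-/

open Finset Real Polynomial

theorem Function.Periodic.sum_range_add {M : Type*} [AddCancelCommMonoid M] {f : ℕ → M} {N : ℕ}
    (hf : Function.Periodic f N) (a : ℕ) : ∑ k ∈ range N, f (a + k) = ∑ k ∈ range N, f k := by
  induction a with
  | zero => simp
  | succ a ih =>
    rw [← ih]
    have h := (sum_range_succ' (fun k => f (a + k)) N).symm.trans (sum_range_succ _ N)
    rw [add_zero, hf a] at h
    simpa [add_assoc, add_comm 1] using add_right_cancel h

theorem sum_Ico_one_inv_le_one_add_log (n : ℕ) : ∑ j ∈ Ico 1 n, (j : ℝ)⁻¹ ≤ 1 + log n :=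
  calc _ ≤ ∑ j ∈ Icc 1 n, (j : ℝ)⁻¹ :=
        sum_le_sum_of_subset_of_nonneg Ico_subset_Icc_self fun _ _ _ => by positivity
    _ = harmonic n := by simp [harmonic_eq_sum_Icc]
    _ ≤ 1 + log n := harmonic_le_one_add_log n

theorem sum_range_exp_int_mul_mul_pi_div (n : ℕ) (hn : n ≠ 0) (m : ℤ) :
    ∑ k ∈ range (2 * n), Complex.exp (m * (k * π / n) * Complex.I) =
      if (2 * n : ℤ) ∣ m then (2 * n : ℂ) else 0 := by
  set ζ := Complex.exp (2 * π * Complex.I / (2 * n : ℕ))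
  have hζ : IsPrimitiveRoot ζ (2 * n) := Complex.isPrimitiveRoot_exp (2 * n) (by positivity)
  have hpow : ∀ k : ℕ, Complex.exp (m * (k * π / n) * Complex.I) = (ζ ^ m) ^ k := by
    intro k
    rw [← zpow_natCast, ← zpow_mul, ← Complex.exp_int_mul]
    congr 1
    push_cast
    field_simp
  simp only [hpow]
  split_ifs with hdvd
  · simp [(hζ.zpow_eq_one_iff_dvd m).mpr (mod_cast hdvd)]
  · rw [geom_sum_eq (mt (hζ.zpow_eq_one_iff_dvd m).mp (mod_cast hdvd)), ← zpow_natCast,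
      ← zpow_mul, mul_comm, zpow_mul, zpow_natCast, hζ.pow_eq_one, one_zpow, sub_self, zero_div]

theorem sum_range_cos_int_mul_mul_pi_div (n : ℕ) (hn : n ≠ 0) (m : ℤ) :
    ∑ k ∈ range (2 * n), cos (m * (k * π / n)) = if (2 * n : ℤ) ∣ m then 2 * n else 0 := by
  have h := congrArg Complex.re (sum_range_exp_int_mul_mul_pi_div n hn m)
  simp only [Complex.re_sum] at h
  convert h using 2
  · rw [← Complex.exp_ofReal_mul_I_re]
    push_cast
    rfl
  · split_ifs <;> simp

theorem sum_range_sin_int_mul_mul_pi_div (n : ℕ) (hn : n ≠ 0) (m : ℤ) :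
    ∑ k ∈ range (2 * n), sin (m * (k * π / n)) = 0 := by
  have h := congrArg Complex.im (sum_range_exp_int_mul_mul_pi_div n hn m)
  simp only [Complex.im_sum] at h
  convert h using 2
  · rw [← Complex.exp_ofReal_mul_I_im]
    push_cast
    rfl
  · split_ifs <;> simp

theorem sum_range_cos_mul_cos (n : ℕ) (hn : n ≠ 0) {i j : ℕ} (hi : i ≤ n) (hj : j ≤ n) :
    ∑ k ∈ range (2 * n), cos (i * (k * π / n)) * cos (j * (k * π / n)) =
      if i = j then (if j = 0 ∨ j = n then 2 * n else n) else 0 := by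
  have hprod : ∀ x : ℝ, cos (i * x) * cos (j * x) =
      (cos (((i + j : ℕ) : ℤ) * x) + cos (((i : ℤ) - j : ℤ) * x)) / 2 := by
    intro x
    push_cast
    rw [add_mul, sub_mul, cos_add, cos_sub]
    ring
  have hplus : (2 * n : ℤ) ∣ ((i + j : ℕ) : ℤ) ↔ j = 0 ∧ i = 0 ∨ j = n ∧ i = n := by
    constructor
    · rintro ⟨c, hc⟩
      push_cast at hc
      have hn0 : (0 : ℤ) < n := by omega
      have : c = 0 ∨ c = 1 := by
        rcases lt_trichotomy c 1 with h | h | h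
        · left; nlinarith
        · exact .inr h
        · nlinarith
      rcases this with rfl | rfl <;> omega
    · rintro (⟨rfl, rfl⟩ | ⟨rfl, rfl⟩)
      · simp
      · exact ⟨1, by push_cast; ring⟩
  have hminus : (2 * n : ℤ) ∣ ((i : ℤ) - j) ↔ i = j := by
    constructor
    · intro h
      have := Int.eq_zero_of_abs_lt_dvd h (by rw [abs_lt]; omega)
      omega
    · rintro rfl
      simp
  simp only [hprod, ← sum_div, sum_add_distrib, sum_range_cos_int_mul_mul_pi_div n hn, hplus,
    hminus]
  split_ifs <;> first | omega | (push_cast; ring)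

theorem sum_range_sin_mul_cos (n : ℕ) (hn : n ≠ 0) (i j : ℕ) :
    ∑ k ∈ range (2 * n), sin (i * (k * π / n)) * cos (j * (k * π / n)) = 0 := by
  have hprod : ∀ x : ℝ, sin (i * x) * cos (j * x) =
      (sin (((i + j : ℕ) : ℤ) * x) + sin (((i : ℤ) - j : ℤ) * x)) / 2 := by
    intro x
    push_cast
    rw [add_mul, sub_mul, sin_add, sin_sub]
    ring
  simp only [hprod, ← sum_div, sum_add_distrib, sum_range_sin_int_mul_mul_pi_div n hn]
  norm_num

/-- Zygmund's modified Dirichlet kernel `D*_n = D_n - cos (n ·) / 2`. -/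
noncomputable def modifiedDirichletKernel (n : ℕ) (φ : ℝ) : ℝ :=
  ∑ i ∈ range (n + 1), cos (i * φ) - 1 / 2 - cos (n * φ) / 2

theorem modifiedDirichletKernel_neg (n : ℕ) (φ : ℝ) :
    modifiedDirichletKernel n (-φ) = modifiedDirichletKernel n φ := by
  simp [modifiedDirichletKernel, mul_neg, cos_neg]

theorem modifiedDirichletKernel_periodic (n : ℕ) :
    Function.Periodic (modifiedDirichletKernel n) (2 * π) := by
  intro φ
  simp [modifiedDirichletKernel, mul_add, cos_add_nat_mul_two_pi]

theorem two_mul_sin_half_mul_sum_range_cos (N : ℕ) (φ : ℝ) :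
    2 * sin (φ / 2) * ∑ i ∈ range N, cos (i * φ) = sin ((N - 1 / 2) * φ) + sin (φ / 2) := by
  induction N with
  | zero =>
    rw [sum_range_zero, Nat.cast_zero, show (0 - 1 / 2) * φ = -(φ / 2) by ring, sin_neg]
    ring
  | succ N ih =>
    rw [sum_range_succ, mul_add, ih, Nat.cast_succ,
      show (N + 1 - 1 / 2) * φ = N * φ + φ / 2 by ring,
      show (N - 1 / 2) * φ = N * φ - φ / 2 by ring, sin_add, sin_sub]
    ring

theorem two_mul_sin_half_mul_modifiedDirichletKernel (n : ℕ) (φ : ℝ) :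
    2 * sin (φ / 2) * modifiedDirichletKernel n φ = sin (n * φ) * cos (φ / 2) := by
  rw [modifiedDirichletKernel, mul_sub, mul_sub, two_mul_sin_half_mul_sum_range_cos, Nat.cast_succ,
    show (n + 1 - 1 / 2) * φ = n * φ + φ / 2 by ring, sin_add]
  ring

theorem abs_modifiedDirichletKernel_le (n : ℕ) (φ : ℝ) :
    |modifiedDirichletKernel n φ| ≤ n + 2 := by
  have hsum : |∑ i ∈ range (n + 1), cos (i * φ)| ≤ n + 1 :=
    (abs_sum_le_sum_abs _ _).trans <| by
      simpa using sum_le_sum fun i (_ : i ∈ range (n + 1)) => abs_cos_le_one (i * φ)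
  rw [modifiedDirichletKernel]
  have := abs_cos_le_one (n * φ)
  rw [abs_le] at *
  constructor <;> linarith

theorem abs_modifiedDirichletKernel_le_pi_div (n : ℕ) {φ : ℝ} (h0 : φ ≠ 0) (hπ : |φ| ≤ π) :
    |modifiedDirichletKernel n φ| ≤ π / (2 * |φ|) := by
  have hsin : |φ| ≤ π * |sin (φ / 2)| := by
    have := mul_abs_le_abs_sin (x := φ / 2) (by rw [abs_div, abs_two]; linarith)
    rw [abs_div, abs_two] at this
    field_simp at this
    linarith
  have hprod : |modifiedDirichletKernel n φ| * (2 * |sin (φ / 2)|) ≤ 1 := by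
    have := congrArg abs (two_mul_sin_half_mul_modifiedDirichletKernel n φ)
    rw [abs_mul, abs_mul, abs_mul, abs_two] at this
    nlinarith [abs_sin_le_one (n * φ), abs_cos_le_one (φ / 2), abs_nonneg (sin (n * φ)),
      abs_nonneg (cos (φ / 2))]
  rw [le_div_iff₀ (by positivity)]
  nlinarith [abs_nonneg (modifiedDirichletKernel n φ), pi_pos]

theorem sum_cos_mul_cos_mul_sub (n : ℕ) (hn : n ≠ 0) {i j : ℕ} (hi : i ≤ n) (hj : j ≤ n) (θ : ℝ) :
    ∑ k ∈ range (2 * n), cos (j * (k * π / n)) * cos (i * (θ - k * π / n)) =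
      if i = j then (if j = 0 ∨ j = n then 2 * n else n) * cos (j * θ) else 0 := by
  have hsplit : ∀ x : ℝ, cos (j * x) * cos (i * (θ - x)) =
      cos (i * θ) * (cos (i * x) * cos (j * x)) + sin (i * θ) * (sin (i * x) * cos (j * x)) := by
    intro x
    rw [mul_sub, cos_sub]
    ring
  simp only [hsplit, sum_add_distrib, ← mul_sum, sum_range_cos_mul_cos n hn hi hj,
    sum_range_sin_mul_cos n hn i j]
  split_ifs <;> simp_all [mul_comm]

theorem sum_cos_mul_modifiedDirichletKernel (n : ℕ) (hn : n ≠ 0) {j : ℕ} (hj : j ≤ n) (θ : ℝ) :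
    ∑ k ∈ range (2 * n), cos (j * (k * π / n)) * modifiedDirichletKernel n (θ - k * π / n) =
      n * cos (j * θ) := by
  have hrow := fun i (hi : i ∈ range (n + 1)) =>
    sum_cos_mul_cos_mul_sub n hn (Nat.lt_succ_iff.mp (mem_range.mp hi)) hj θ
  have hconst := sum_cos_mul_cos_mul_sub n hn (Nat.zero_le n) hj θ
  simp only [Nat.cast_zero, zero_mul, cos_zero, mul_one] at hconst
  calc _ = ∑ i ∈ range (n + 1),
          ∑ k ∈ range (2 * n), cos (j * (k * π / n)) * cos (i * (θ - k * π / n))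
        - (∑ k ∈ range (2 * n), cos (j * (k * π / n))) / 2
        - (∑ k ∈ range (2 * n), cos (j * (k * π / n)) * cos (n * (θ - k * π / n))) / 2 := by
        simp only [modifiedDirichletKernel, mul_sub, mul_sum, sum_sub_distrib, ← sum_div,
          mul_div_assoc', mul_one]
        rw [sum_comm]
    _ = n * cos (j * θ) := by
        rw [sum_congr rfl hrow, hconst, sum_cos_mul_cos_mul_sub n hn le_rfl hj θ,
          sum_ite_eq' (range (n + 1)) j, if_pos (mem_range.mpr (by omega))]
        split_ifs <;> first | omega | (push_cast; ring)

theorem exists_eval_cos_eq_sum_cos {n : ℕ} {p : ℝ[X]} (hp : p.natDegree ≤ n) :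
    ∃ c : ℕ → ℝ, ∀ θ, p.eval (cos θ) = ∑ i ∈ range (n + 1), c i * cos (i * θ) := by
  have hmem : p ∈ Submodule.span ℝ (Chebyshev.chebyshevTsequence ℝ '' ↑(range (n + 1))) := by
    rw [coe_range, Sequence.span_degreeLT _ (by simp), mem_degreeLT]
    exact (degree_le_of_natDegree_le hp).trans_lt (by exact_mod_cast n.lt_succ_self)
  obtain ⟨c, rfl⟩ := (Submodule.mem_span_image_finset_iff_exists_fun' ℝ).mp hmem
  refine ⟨c, fun θ => ?_⟩
  simp [eval_finsetSum, Chebyshev.chebyshevTsequence, Chebyshev.T_real_cos]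

theorem natCast_mul_eval_cos_eq_sum (n : ℕ) (hn : n ≠ 0) {p : ℝ[X]} (hp : p.natDegree ≤ n)
    (θ : ℝ) : n * p.eval (cos θ) = ∑ k ∈ range (2 * n),
      p.eval (cos (k * π / n)) * modifiedDirichletKernel n (θ - k * π / n) := by
  obtain ⟨c, hc⟩ := exists_eval_cos_eq_sum_cos hp
  simp only [hc, mul_sum, sum_mul]
  rw [sum_comm]
  refine sum_congr rfl fun i hi => ?_
  rw [mul_left_comm, ← sum_cos_mul_modifiedDirichletKernel n hn
    (Nat.lt_succ_iff.mp (mem_range.mp hi)), mul_sum]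
  exact sum_congr rfl fun k _ => by ring

theorem sum_range_abs_modifiedDirichletKernel_le (n : ℕ) (hn : n ≠ 0) {r : ℝ} (hr0 : 0 ≤ r)
    (hr1 : r ≤ 1) :
    ∑ j ∈ range n, |modifiedDirichletKernel n ((j + r) * π / n)| ≤ n + 2 + n / 2 * (1 + log n) := by
  have hn0 : (0 : ℝ) < n := by positivity
  have hfar : ∀ j ∈ Ico 1 n, |modifiedDirichletKernel n ((j + r) * π / n)| ≤ n / 2 * (j : ℝ)⁻¹ := by
    intro j hj
    have hj1 : (1 : ℝ) ≤ j := by exact_mod_cast (mem_Ico.mp hj).1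
    have hjn : (j : ℝ) + 1 ≤ n := by exact_mod_cast (mem_Ico.mp hj).2
    have hφ : 0 < (j + r) * π / n := by positivity
    refine (abs_modifiedDirichletKernel_le_pi_div n hφ.ne' ?_).trans ?_
    · rw [abs_of_pos hφ, div_le_iff₀ hn0]
      nlinarith [pi_pos]
    · rw [abs_of_pos hφ]
      field_simp
      nlinarith [pi_pos]
  rw [range_eq_Ico, sum_eq_sum_Ico_succ_bot (Nat.pos_of_ne_zero hn)]
  gcongr
  · simpa using abs_modifiedDirichletKernel_le n (r * π / n)
  · refine (sum_le_sum hfar).trans ?_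
    rw [← mul_sum]
    gcongr
    exact sum_Ico_one_inv_le_one_add_log n

/-- Write `θ = (k₀ + t) π / n` with `k₀ ∈ ℕ`, `t ∈ [0, 1)`. Up to the period `2π` and the symmetry
of the kernel, the `2n` arguments `θ - kπ/n` are the half-grids `(j + t) π / n` and
`(j + 1 - t) π / n`, `j < n`. -/
theorem sum_range_abs_modifiedDirichletKernel_sub_le (n : ℕ) (hn : n ≠ 0) {θ : ℝ} (hθ0 : 0 ≤ θ)
    (hθπ : θ ≤ π) :
    ∑ k ∈ range (2 * n), |modifiedDirichletKernel n (θ - k * π / n)| ≤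
      2 * (n + 2) + n * (1 + log n) := by
  have hn0 : (0 : ℝ) < n := by positivity
  set s := θ * n / π with hs
  set k₀ := ⌊s⌋₊
  set t := s - k₀
  have hs0 : 0 ≤ s := by positivity
  have ht0 : 0 ≤ t := sub_nonneg.mpr (Nat.floor_le hs0)
  have ht1 : t < 1 := by linarith [Nat.lt_floor_add_one s]
  have hk₀ : k₀ ≤ n := Nat.floor_le_of_le (by rw [hs, div_le_iff₀ pi_pos]; nlinarith)
  set F : ℕ → ℝ := fun j => |modifiedDirichletKernel n ((j - t - n) * π / n)|
  have hF : Function.Periodic F (2 * n : ℕ) := by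
    intro j
    simp only [F]
    rw [show ((j + 2 * n : ℕ) - t - n) * π / n = (j - t - n) * π / n + 2 * π by
      push_cast; field_simp; ring, modifiedDirichletKernel_periodic]
  have hterm : ∀ k : ℕ, |modifiedDirichletKernel n (θ - k * π / n)| = F (n - k₀ + k) := by
    intro k
    simp only [F]
    rw [← modifiedDirichletKernel_neg]
    congr 2
    rw [Nat.cast_add, Nat.cast_sub hk₀, show θ = s * π / n by rw [hs]; field_simp]
    simp only [t]
    ring
  have hleft : ∀ k ∈ range n,
      F (1 + k) = |modifiedDirichletKernel n (((n - 1 - k : ℕ) + t) * π / n)| := by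
    intro k hk
    simp only [F]
    rw [← modifiedDirichletKernel_neg]
    congr 2
    rw [Nat.cast_sub (by have := mem_range.mp hk; omega), Nat.cast_sub (by omega)]
    push_cast
    ring
  have hright : ∀ k : ℕ, F (1 + (n + k)) = |modifiedDirichletKernel n ((k + (1 - t)) * π / n)| := by
    intro k
    simp only [F]
    congr 2
    push_cast
    ring
  calc ∑ k ∈ range (2 * n), |modifiedDirichletKernel n (θ - k * π / n)|
      = ∑ k ∈ range (2 * n), F (1 + k) := by
        simp only [hterm, hF.sum_range_add]
    _ = ∑ k ∈ range n, |modifiedDirichletKernel n ((k + t) * π / n)|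
        + ∑ k ∈ range n, |modifiedDirichletKernel n ((k + (1 - t)) * π / n)| := by
        rw [two_mul, sum_range_add, sum_congr rfl hleft, sum_range_reflect (fun j : ℕ =>
          |modifiedDirichletKernel n ((j + t) * π / n)|) n]
        simp only [hright]
    _ ≤ 2 * (n + 2) + n * (1 + log n) := by
        linarith [sum_range_abs_modifiedDirichletKernel_le n hn ht0 ht1.le,
          sum_range_abs_modifiedDirichletKernel_le n hn (sub_nonneg.mpr ht1.le) (by linarith)]

theorem exists_le_cos_nat_mul_pi_div_eq (n : ℕ) (hn : n ≠ 0) {k : ℕ} (hk : k ≤ 2 * n) :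
    ∃ k' ≤ n, cos (k * π / n) = cos (k' * π / n) := by
  rcases le_total k n with hkn | hnk
  · exact ⟨k, hkn, rfl⟩
  · refine ⟨2 * n - k, by omega, ?_⟩
    rw [Nat.cast_sub hk, ← cos_two_pi_sub]
    congr 1
    push_cast
    field_simp

theorem natCast_mul_abs_eval_cos_le (n : ℕ) (hn : n ≠ 0) {p : ℝ[X]} (hp : p.natDegree ≤ n)
    {M : ℝ} (hM : ∀ k : ℕ, k ≤ n → |p.eval (cos (k * π / n))| ≤ M) {θ : ℝ} (hθ0 : 0 ≤ θ)
    (hθπ : θ ≤ π) : n * |p.eval (cos θ)| ≤ M * (2 * (n + 2) + n * (1 + log n)) := by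
  have hnodes : ∀ k ∈ range (2 * n), |p.eval (cos (k * π / n))| ≤ M := by
    intro k hk
    obtain ⟨k', hk', hcos⟩ := exists_le_cos_nat_mul_pi_div_eq n hn (mem_range.mp hk).le
    exact hcos ▸ hM k' hk'
  have hM0 : 0 ≤ M := (abs_nonneg _).trans (hM 0 (Nat.zero_le n))
  calc (n : ℝ) * |p.eval (cos θ)|
      = |∑ k ∈ range (2 * n),
          p.eval (cos (k * π / n)) * modifiedDirichletKernel n (θ - k * π / n)| := by
        rw [← natCast_mul_eval_cos_eq_sum n hn hp θ, abs_mul, Nat.abs_cast]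
    _ ≤ ∑ k ∈ range (2 * n), M * |modifiedDirichletKernel n (θ - k * π / n)| := by
        refine (abs_sum_le_sum_abs _ _).trans (sum_le_sum fun k hk => ?_)
        rw [abs_mul]
        exact mul_le_mul_of_nonneg_right (hnodes k hk) (abs_nonneg _)
    _ ≤ M * (2 * (n + 2) + n * (1 + log n)) := by
        rw [← mul_sum]
        exact mul_le_mul_of_nonneg_left
          (sum_range_abs_modifiedDirichletKernel_sub_le n hn hθ0 hθπ) hM0

/-- The Chebyshev–Lobatto points `C_n = {cos(kπ/n) : k = 0,…,n}` form a one-dimensional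
weakly admissible mesh for `[-1,1]` with constant `C(A_n) = O(log n)`:
there is `c > 0` such that for all `n ≥ 2` and every real polynomial `p` of degree at most `n`,
`‖p‖_{[-1,1]} ≤ c · log n · max_{0 ≤ k ≤ n} |p(cos(kπ/n))|`. -/
theorem chebyshev_lobatto_WAM :
    ∃ c : ℝ, 0 < c ∧
      ∀ n : ℕ, 2 ≤ n →
        ∀ p : Polynomial ℝ, p.natDegree ≤ n →
          ∀ M : ℝ, (∀ k : ℕ, k ≤ n → |p.eval (Real.cos (k * Real.pi / n))| ≤ M) →
            ∀ x ∈ Set.Icc (-1 : ℝ) 1, |p.eval x| ≤ c * Real.log n * M := by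
  refine ⟨9, by norm_num, fun n hn p hp M hM x hx => ?_⟩
  have hn2 : (2 : ℝ) ≤ n := by exact_mod_cast hn
  have hbound := natCast_mul_abs_eval_cos_le n (by omega) hp hM (arccos_nonneg x) (arccos_le_pi x)
  rw [cos_arccos hx.1 hx.2] at hbound
  have hM0 : 0 ≤ M := (abs_nonneg _).trans (hM 0 (Nat.zero_le n))
  have hlog : log 2 ≤ log n := log_le_log (by norm_num) hn2
  have hconst : 2 * (n + 2) + n * (1 + log n) ≤ n * (9 * log n) := by
    nlinarith [log_two_gt_d9]
  refine le_of_mul_le_mul_left ?_ (by positivity : (0 : ℝ) < n)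
  nlinarith [mul_le_mul_of_nonneg_left hconst hM0]
end

section
/- For every natural number n ≥ 1, the polar symmetric grid A_n = {(r_i cos θ_j, r_i sin θ_j) : r_i = cos(iπ/n), 0 ≤ i ≤ n; θ_j = jπ/(n+1), 0 ≤ j ≤ n} in the closed unit disk has cardinality (n+1)² when n is odd and cardinality n² + n + 1 when n is even. -/
/-!
The grid is the image of (signed radii) × (angles) under `(r, θ) ↦ (r cos θ, r sin θ)`.
With all angles in `[0, π)` this map is injective as long as `r ≠ 0`: from equal images one
gets `r sin (θ - θ') = 0`, and `θ - θ' ∈ (-π, π)`. The radii `cos (iπ/n)` are `n + 1` distinct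
numbers, and exactly one of them vanishes when `n` is even (`i = n/2`), none when `n` is odd;
all points of radius `0` collapse to the origin.
-/

/-- The polar symmetric grid of degree `n` for the closed unit disk:
`A_n = {(r_i cos θ_j, r_i sin θ_j)}` with `r_i = cos(iπ/n)`, `0 ≤ i ≤ n`, and
`θ_j = jπ/(n+1)`, `0 ≤ j ≤ n` (coincident points counted once). -/
noncomputable def polarGrid (n : ℕ) : Finset (ℝ × ℝ) :=
  (Finset.range (n + 1) ×ˢ Finset.range (n + 1)).image
    (fun ij : ℕ × ℕ =>
      (Real.cos (ij.1 * Real.pi / n) * Real.cos (ij.2 * Real.pi / (n + 1)),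
        Real.cos (ij.1 * Real.pi / n) * Real.sin (ij.2 * Real.pi / (n + 1))))

open Real Finset

theorem polarCoord_symm_eq_zero_iff {p : ℝ × ℝ} : polarCoord.symm p = 0 ↔ p.1 = 0 := by
  refine ⟨fun h => ?_, fun h => by simp [polarCoord_symm_apply, h]⟩
  rw [polarCoord_symm_apply, Prod.mk_eq_zero] at h
  have hsq : p.1 ^ 2 = (p.1 * cos p.2) ^ 2 + (p.1 * sin p.2) ^ 2 := by
    linear_combination p.1 ^ 2 * (cos_sq_add_sin_sq p.2).symm
  rw [h.1, h.2] at hsq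
  exact pow_eq_zero_iff two_ne_zero |>.mp (by simpa using hsq)

theorem injOn_polarCoord_symm : Set.InjOn polarCoord.symm ({0}ᶜ ×ˢ Set.Ico 0 π) := by
  rintro ⟨r, θ⟩ ⟨hr, hθ⟩ ⟨r', θ'⟩ ⟨-, hθ'⟩ h
  simp only [polarCoord_symm_apply, Prod.mk.injEq] at h
  have hsin : r * sin (θ - θ') = 0 := by
    rw [sin_sub]; linear_combination cos θ' * h.2 - sin θ' * h.1
  have hcos : r * cos (θ - θ') = r' := by
    rw [cos_sub]; linear_combination cos θ' * h.1 + sin θ' * h.2 + r' * cos_sq_add_sin_sq θ'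
  have hθθ' : θ - θ' = 0 :=
    (sin_eq_zero_iff_of_lt_of_lt (by linarith [hθ.1, hθ'.2]) (by linarith [hθ.2, hθ'.1])).mp
      ((mul_eq_zero.mp hsin).resolve_left hr)
  rw [hθθ', cos_zero, mul_one] at hcos
  rw [hcos, sub_eq_zero.mp hθθ']

theorem card_image_polarCoord_symm_prod (R : Finset ℝ) {Θ : Finset ℝ}
    (hΘ : (Θ : Set ℝ) ⊆ Set.Ico 0 π) (hΘne : Θ.Nonempty) :
    #((R ×ˢ Θ).image ⇑polarCoord.symm) = #(R.erase 0) * #Θ + if (0 : ℝ) ∈ R then 1 else 0 := by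
  have hinj : Set.InjOn polarCoord.symm ↑(R.erase 0 ×ˢ Θ) := by
    refine injOn_polarCoord_symm.mono ?_
    rw [coe_product]
    exact Set.prod_mono (fun r hr => (mem_erase.mp hr).1) hΘ
  split_ifs with h0
  · have hsplit : R ×ˢ Θ = {0} ×ˢ Θ ∪ R.erase 0 ×ˢ Θ := by
      rw [← union_product, ← insert_eq, insert_erase h0]
    have hcenter : (({0} : Finset ℝ) ×ˢ Θ).image ⇑polarCoord.symm = {0} :=
      ((singleton_nonempty 0).product hΘne |>.image _).subset_singleton_iff.mp <|
        image_subset_iff.mpr fun p hp =>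
          mem_singleton.mpr <| polarCoord_symm_eq_zero_iff.mpr (mem_singleton.mp (mem_product.mp hp).1)
    have hdisj : Disjoint ({0} : Finset (ℝ × ℝ)) ((R.erase 0 ×ˢ Θ).image ⇑polarCoord.symm) := by
      refine disjoint_singleton_left.mpr fun h => ?_
      obtain ⟨p, hp, hp0⟩ := mem_image.mp h
      exact (mem_erase.mp (mem_product.mp hp).1).1 (polarCoord_symm_eq_zero_iff.mp hp0)
    rw [hsplit, image_union, hcenter, card_union_of_disjoint hdisj, card_singleton,
      card_image_of_injOn hinj, card_product, add_comm]
  · rw [erase_eq_of_notMem h0] at hinj ⊢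
    rw [card_image_of_injOn hinj, card_product, add_zero]

theorem natCast_mul_pi_div_mem_Icc {i n : ℕ} (hi : i ≤ n) : (i : ℝ) * π / n ∈ Set.Icc 0 π := by
  rw [mul_div_right_comm]
  exact ⟨by positivity,
    mul_le_of_le_one_left pi_pos.le (div_le_one_of_le₀ (by exact_mod_cast hi) n.cast_nonneg)⟩

theorem natCast_mul_pi_div_succ_mem_Ico {j n : ℕ} (hj : j ≤ n) :
    (j : ℝ) * π / (n + 1) ∈ Set.Ico 0 π := by
  rw [mul_div_right_comm]
  refine ⟨by positivity, mul_lt_of_lt_one_left pi_pos ((div_lt_one (by positivity)).mpr ?_)⟩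
  exact_mod_cast Nat.lt_succ_of_le hj

theorem cos_natCast_mul_pi_div_eq_zero_iff {i n : ℕ} (hn : n ≠ 0) (hi : i ≤ n) :
    cos (i * π / n) = 0 ↔ 2 * i = n := by
  rw [← cos_pi_div_two, injOn_cos.eq_iff (natCast_mul_pi_div_mem_Icc hi)
    ⟨by positivity, by linarith [pi_pos]⟩, div_eq_div_iff (by positivity) two_ne_zero,
    mul_right_comm, mul_comm π, mul_left_inj' pi_ne_zero, mul_comm]
  exact_mod_cast Iff.rfl

theorem injOn_cos_natCast_mul_pi_div {n : ℕ} (hn : n ≠ 0) :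
    Set.InjOn (fun i : ℕ => cos (i * π / n)) (Set.Iic n) := by
  intro i hi i' hi' h
  have hmul := injOn_cos (natCast_mul_pi_div_mem_Icc hi) (natCast_mul_pi_div_mem_Icc hi') h
  rw [div_left_inj' (by positivity), mul_left_inj' pi_ne_zero] at hmul
  exact_mod_cast hmul

namespace polarGrid

noncomputable def radii (n : ℕ) : Finset ℝ :=
  (range (n + 1)).image fun i : ℕ => cos (i * π / n)

noncomputable def angles (n : ℕ) : Finset ℝ :=
  (range (n + 1)).image fun j : ℕ => j * π / (n + 1)

theorem eq_image_radii_prod_angles (n : ℕ) :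
    polarGrid n = (radii n ×ˢ angles n).image ⇑polarCoord.symm := by
  rw [radii, angles, ← prodMap_image_product, image_image]
  rfl

theorem angles_subset_Ico (n : ℕ) : (angles n : Set ℝ) ⊆ Set.Ico 0 π := by
  simp only [angles, coe_image, coe_range, Set.image_subset_iff]
  exact fun j hj => natCast_mul_pi_div_succ_mem_Ico (Nat.lt_succ_iff.mp hj)

theorem angles_nonempty (n : ℕ) : (angles n).Nonempty :=
  (nonempty_range_iff.mpr n.succ_ne_zero).image _

theorem card_angles (n : ℕ) : #(angles n) = n + 1 := by
  rw [angles, card_image_of_injective _ fun j j' h => ?_, card_range]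
  rw [div_left_inj' (by positivity), mul_left_inj' pi_ne_zero] at h
  exact_mod_cast h

theorem card_radii {n : ℕ} (hn : n ≠ 0) : #(radii n) = n + 1 := by
  rw [radii, card_image_of_injOn, card_range]
  exact (injOn_cos_natCast_mul_pi_div hn).mono fun i hi =>
    Nat.lt_succ_iff.mp (mem_range.mp hi)

theorem zero_mem_radii_iff {n : ℕ} (hn : n ≠ 0) : (0 : ℝ) ∈ radii n ↔ Even n := by
  simp only [radii, mem_image, mem_range, Nat.lt_succ_iff]
  constructor
  · rintro ⟨i, hi, h0⟩
    rw [cos_natCast_mul_pi_div_eq_zero_iff hn hi] at h0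
    exact ⟨i, by omega⟩
  · rintro ⟨m, rfl⟩
    exact ⟨m, by omega, (cos_natCast_mul_pi_div_eq_zero_iff hn (by omega)).mpr (by omega)⟩

end polarGrid

/-- For `n ≥ 1`, the polar symmetric grid of degree `n` has `(n+1)²` distinct points
when `n` is odd, and `n² + n + 1` distinct points when `n` is even. -/
theorem polarGrid_card (n : ℕ) (hn : 1 ≤ n) :
    (Odd n → (polarGrid n).card = (n + 1) ^ 2) ∧
      (Even n → (polarGrid n).card = n ^ 2 + n + 1) := by
  have hn0 : n ≠ 0 := Nat.one_le_iff_ne_zero.mp hn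
  have hcard : #(polarGrid n) = #((polarGrid.radii n).erase 0) * (n + 1) +
      if (0 : ℝ) ∈ polarGrid.radii n then 1 else 0 := by
    rw [polarGrid.eq_image_radii_prod_angles, card_image_polarCoord_symm_prod _
      (polarGrid.angles_subset_Ico n) (polarGrid.angles_nonempty n), polarGrid.card_angles]
  refine ⟨fun hodd => ?_, fun heven => ?_⟩
  · have h0 : (0 : ℝ) ∉ polarGrid.radii n :=
      fun h => Nat.not_even_iff_odd.mpr hodd ((polarGrid.zero_mem_radii_iff hn0).mp h)
    rw [hcard, if_neg h0, erase_eq_of_notMem h0, polarGrid.card_radii hn0]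
    ring
  · have h0 : (0 : ℝ) ∈ polarGrid.radii n := (polarGrid.zero_mem_radii_iff hn0).mpr heven
    rw [hcard, if_pos h0, card_erase_of_mem h0, polarGrid.card_radii hn0, Nat.add_sub_cancel]
    ring
end

section
/- There exists a constant c > 0 such that for every integer n ≥ 2 and every real trigonometric polynomial q of degree at most n, i.e. q(θ) = a_0 + Σ_{k=1}^{n} (a_k cos(kθ) + b_k sin(kθ)) with real coefficients, the supremum of |q| over [0, 2π] is at most c·(log n) times the maximum of |q| over the 2n+2 equispaced angles θ_k = 2kπ/(2n+2) = kπ/(n+1), k = 0, 1, ..., 2n+1. -/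
/-!
Sampling at the `N > 2n` equispaced nodes `θₖ = 2πk/N` and interpolating with the Dirichlet
kernel `Dₙ(u) = ∑_{|m| ≤ n} e^{imu}` reproduces every trigonometric polynomial of degree `≤ n`,
by discrete orthogonality of `e^{ipθₖ}` for `0 < |p| < N`. Hence `N |q θ| ≤ M ∑ₖ |Dₙ(θ - θₖ)|`.
The right-hand sum is `2π/N`-periodic in `θ`, so take `θ ∈ [0, 2π/N]`: the two nearest nodes
contribute at most `2n + 1 < N` each, and for the others `|Dₙ(u)| ≤ 1/|sin(u/2)|` together with
Jordan's inequality gives harmonic sums, so the sum is at most `N (2 + H_{N-2}) = O(N log N)`.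
-/
open Complex Finset Function
open scoped Real

namespace TrigInterpolation

noncomputable def dirichletKernel (n : ℕ) (u : ℝ) : ℂ :=
  ∑ m ∈ Icc (-n : ℤ) n, exp (m * u * I)

lemma sum_range_exp_mul_grid {N : ℕ} {p : ℤ} (hp : |p| < N) :
    ∑ k ∈ range N, exp (p * (2 * π * k / N) * I) = if p = 0 then (N : ℂ) else 0 := by
  split_ifs with hp0
  · simp [hp0]
  set ζ := exp (2 * π * I / N)
  have hζ : IsPrimitiveRoot ζ N := isPrimitiveRoot_exp N (by grind [abs_nonneg p])
  have hterm (k : ℕ) : exp (p * (2 * π * k / N) * I) = (ζ ^ p) ^ k := by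
    rw [← exp_int_mul, ← exp_nat_mul]; congr 1; ring
  have hne_one : ζ ^ p ≠ 1 := fun h =>
    hp0 (Int.eq_zero_of_abs_lt_dvd ((hζ.zpow_eq_one_iff_dvd p).1 h) hp)
  have hpow_N : (ζ ^ p) ^ N = 1 := by
    rw [← zpow_natCast, ← zpow_mul, mul_comm, zpow_mul, zpow_natCast, hζ.pow_eq_one, one_zpow]
  simp_rw [hterm]
  rw [geom_sum_eq hne_one, hpow_N, sub_self, zero_div]

def dirichletReproduced (n N : ℕ) : Submodule ℂ (ℝ → ℂ) where
  carrier := {f | ∀ θ : ℝ,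
    ∑ k ∈ range N, f (2 * π * k / N) * dirichletKernel n (θ - 2 * π * k / N) = N * f θ}
  add_mem' {f g} hf hg θ := by
    simp only [Pi.add_apply, add_mul, sum_add_distrib, hf θ, hg θ, mul_add]
  zero_mem' θ := by simp
  smul_mem' c f hf θ := by
    simp only [Pi.smul_apply, smul_eq_mul]
    rw [mul_left_comm, ← hf θ, mul_sum]
    exact sum_congr rfl fun k _ => mul_assoc _ _ _

lemma exp_mem_dirichletReproduced {n N : ℕ} (hN : 2 * n < N) {p : ℤ} (hp : |p| ≤ n) :
    (fun θ : ℝ => exp (p * θ * I)) ∈ dirichletReproduced n N := by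
  intro θ
  have hp' := abs_le.1 hp
  calc ∑ k ∈ range N, exp (p * (2 * π * k / N : ℝ) * I) * dirichletKernel n (θ - 2 * π * k / N)
      = ∑ m ∈ Icc (-n : ℤ) n, exp (m * θ * I) *
          ∑ k ∈ range N, exp ((p - m : ℤ) * (2 * π * k / N) * I) := by
        simp only [dirichletKernel, mul_sum]
        rw [sum_comm]
        refine sum_congr rfl fun m _ => sum_congr rfl fun k _ => ?_
        rw [← exp_add, ← exp_add]; congr 1; push_cast; ring
    _ = ∑ m ∈ Icc (-n : ℤ) n, if p = m then N * exp (p * θ * I) else 0 := by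
        -- `|p - m| ≤ 2n < N`, so the inner sum vanishes unless `m = p`
        refine sum_congr rfl fun m hm => ?_
        rw [mem_Icc] at hm
        rw [sum_range_exp_mul_grid (by rw [abs_lt]; omega)]
        simp only [sub_eq_zero]
        split_ifs with h
        · rw [h, mul_comm]
        · rw [mul_zero]
    _ = N * exp (p * θ * I) := by
        rw [sum_ite_eq, if_pos (mem_Icc.2 hp')]

section
variable {n N : ℕ} (hN : 2 * n < N)
include hN

lemma one_mem_dirichletReproduced : (fun _ : ℝ => (1 : ℂ)) ∈ dirichletReproduced n N := by
  simpa using exp_mem_dirichletReproduced hN (p := 0) (by simp)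

lemma cos_mem_dirichletReproduced {j : ℕ} (hj : j ≤ n) :
    (fun θ : ℝ => (Real.cos (j * θ) : ℂ)) ∈ dirichletReproduced n N := by
  have hcos : (fun θ : ℝ => (Real.cos (j * θ) : ℂ)) = (2 : ℂ)⁻¹ •
      ((fun θ : ℝ => exp ((j : ℤ) * θ * I)) + fun θ : ℝ => exp ((-j : ℤ) * θ * I)) := by
    funext θ
    simp only [ofReal_cos, cos, Pi.smul_apply, Pi.add_apply, smul_eq_mul]
    push_cast; ring_nf
  rw [hcos]
  exact Submodule.smul_mem _ _ (Submodule.add_mem _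
    (exp_mem_dirichletReproduced hN (by simpa using hj))
    (exp_mem_dirichletReproduced hN (by simpa using hj)))

lemma sin_mem_dirichletReproduced {j : ℕ} (hj : j ≤ n) :
    (fun θ : ℝ => (Real.sin (j * θ) : ℂ)) ∈ dirichletReproduced n N := by
  have hsin : (fun θ : ℝ => (Real.sin (j * θ) : ℂ)) = (I / 2) •
      ((fun θ : ℝ => exp ((-j : ℤ) * θ * I)) - fun θ : ℝ => exp ((j : ℤ) * θ * I)) := by
    funext θ
    simp only [ofReal_sin, sin, Pi.smul_apply, Pi.sub_apply, smul_eq_mul]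
    push_cast; ring_nf
  rw [hsin]
  exact Submodule.smul_mem _ _ (Submodule.sub_mem _
    (exp_mem_dirichletReproduced hN (by simpa using hj))
    (exp_mem_dirichletReproduced hN (by simpa using hj)))

lemma trigPoly_mem_dirichletReproduced {a b : ℕ → ℝ} {q : ℝ → ℝ}
    (hq : ∀ θ, q θ = a 0 + ∑ k ∈ Icc 1 n, (a k * Real.cos (k * θ) + b k * Real.sin (k * θ))) :
    (fun θ => (q θ : ℂ)) ∈ dirichletReproduced n N := by
  have hexpand : (fun θ => (q θ : ℂ)) = (a 0 : ℂ) • (fun _ : ℝ => (1 : ℂ)) +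
      ∑ k ∈ Icc 1 n, ((a k : ℂ) • (fun θ : ℝ => (Real.cos (k * θ) : ℂ)) +
        (b k : ℂ) • fun θ : ℝ => (Real.sin (k * θ) : ℂ)) := by
    funext θ
    simp [hq]
  rw [hexpand]
  refine add_mem (Submodule.smul_mem _ _ (one_mem_dirichletReproduced hN))
    (sum_mem fun k hk => add_mem (Submodule.smul_mem _ _ ?_) (Submodule.smul_mem _ _ ?_))
  · exact cos_mem_dirichletReproduced hN (mem_Icc.1 hk).2
  · exact sin_mem_dirichletReproduced hN (mem_Icc.1 hk).2

end

lemma dirichletKernel_periodic (n : ℕ) : Periodic (dirichletKernel n) (2 * π) := by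
  intro u
  refine sum_congr rfl fun m _ => ?_
  rw [show (m : ℂ) * ((u + 2 * π : ℝ) : ℂ) * I = m * u * I + m * (2 * π * I) by push_cast; ring,
    exp_add, exp_int_mul_two_pi_mul_I, mul_one]

lemma norm_dirichletKernel_le (n : ℕ) (u : ℝ) : ‖dirichletKernel n u‖ ≤ 2 * n + 1 := by
  calc ‖dirichletKernel n u‖ ≤ ∑ m ∈ Icc (-n : ℤ) n, ‖exp (m * u * I)‖ := norm_sum_le _ _
    _ = 2 * n + 1 := by
      simp only [← ofReal_intCast, ← ofReal_mul, norm_exp_ofReal_mul_I, sum_const, Int.card_Icc,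
        nsmul_eq_mul, mul_one]
      rw [show (n + 1 - -n : ℤ).toNat = 2 * n + 1 by omega]
      push_cast; ring

lemma dirichletKernel_mul_exp_sub_one (n : ℕ) (u : ℝ) :
    dirichletKernel n u * (exp (u * I) - 1) = exp ((n + 1) * u * I) - exp (-n * u * I) := by
  rw [dirichletKernel, Int.Icc_eq_finset_map, sum_map, sum_mul,
    show (n + 1 - -n : ℤ).toNat = 2 * n + 1 by omega]
  convert sum_range_sub (fun j : ℕ => exp ((-n + j : ℂ) * u * I)) (2 * n + 1) using 1
  · refine sum_congr rfl fun j _ => ?_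
    simp only [Embedding.trans_apply, Nat.castEmbedding_apply, addLeftEmbedding_apply]
    rw [mul_sub, ← exp_add]; push_cast; ring_nf
  · push_cast; ring_nf

lemma norm_dirichletKernel_mul_abs_sin_le (n : ℕ) (u : ℝ) :
    ‖dirichletKernel n u‖ * |Real.sin (u / 2)| ≤ 1 := by
  have hprod := congrArg norm (dirichletKernel_mul_exp_sub_one n u)
  have hsin : ‖exp (u * I) - 1‖ = 2 * |Real.sin (u / 2)| := by
    rw [mul_comm, norm_exp_I_mul_ofReal_sub_one]; simp
  have hdiff : ‖exp ((n + 1) * u * I) - exp (-n * u * I)‖ ≤ 2 :=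
    (norm_sub_le _ _).trans (by norm_num [norm_exp])
  rw [norm_mul, hsin] at hprod
  linarith

lemma inv_sin_le {x : ℝ} (hx₀ : 0 < x) (hxπ : x < π) :
    (Real.sin x)⁻¹ ≤ π / 2 * (x⁻¹ + (π - x)⁻¹) := by
  wlog hx : x ≤ π / 2 generalizing x
  · have := this (x := π - x) (by linarith) (by linarith) (by linarith)
    rwa [Real.sin_pi_sub, sub_sub_cancel, add_comm] at this
  have hπ := Real.pi_pos
  calc (Real.sin x)⁻¹ ≤ (2 / π * x)⁻¹ := inv_anti₀ (by positivity) (Real.mul_le_sin hx₀.le hx)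
    _ = π / 2 * x⁻¹ := by field_simp
    _ ≤ π / 2 * (x⁻¹ + (π - x)⁻¹) := by
      gcongr; exact le_add_of_nonneg_right (inv_nonneg.2 (by linarith))

lemma norm_dirichletKernel_sub_grid_le (n : ℕ) {N : ℕ} {θ : ℝ} (hθ : θ ∈ Set.Icc 0 (2 * π / N))
    {k : ℕ} (hk : k ∈ Ico 2 N) :
    ‖dirichletKernel n (θ - 2 * π * k / N)‖ ≤ N / 2 * (((k : ℝ) - 1)⁻¹ + ((N : ℝ) - k)⁻¹) := by
  obtain ⟨hk2, hkN⟩ := mem_Ico.1 hk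
  have hπ := Real.pi_pos
  have hk1 : (1 : ℝ) ≤ k - 1 := by
    have : (2 : ℝ) ≤ k := by exact_mod_cast hk2
    linarith
  have hNk : (1 : ℝ) ≤ N - k := by
    have : (k : ℝ) + 1 ≤ N := by exact_mod_cast hkN
    linarith
  have hNpos : (0 : ℝ) < N := by linarith
  set h := 2 * π / N with hh
  have hhpos : 0 < h := by positivity
  have hNh : N * h = 2 * π := by rw [hh]; field_simp
  rw [show 2 * π * k / N = k * h by rw [hh]; ring]
  set x := (k * h - θ) / 2 with hx
  have hx_lo : (k - 1) * h / 2 ≤ x := by rw [hx]; linarith [hθ.2]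
  have hx_hi : (N - k) * h / 2 ≤ π - x := by rw [hx]; nlinarith [hθ.1]
  have hx₀ : 0 < x := lt_of_lt_of_le (by positivity) hx_lo
  have hxπ : x < π := by linarith [lt_of_lt_of_le (by positivity : 0 < (N - k) * h / 2) hx_hi]
  have hsin : |Real.sin ((k * h - θ) / 2)| = Real.sin x :=
    abs_of_pos (Real.sin_pos_of_pos_of_lt_pi hx₀ hxπ)
  calc ‖dirichletKernel n (θ - k * h)‖ ≤ (Real.sin x)⁻¹ := by
        rw [← one_div, le_div_iff₀ (Real.sin_pos_of_pos_of_lt_pi hx₀ hxπ), ← hsin, ← abs_neg,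
          ← Real.sin_neg, ← neg_div, neg_sub]
        exact norm_dirichletKernel_mul_abs_sin_le n _
    _ ≤ π / 2 * (x⁻¹ + (π - x)⁻¹) := inv_sin_le hx₀ hxπ
    _ ≤ π / 2 * (((k - 1) * h / 2)⁻¹ + ((N - k) * h / 2)⁻¹) := by
        gcongr
    _ = N / 2 * (((k : ℝ) - 1)⁻¹ + ((N : ℝ) - k)⁻¹) := by
        have : (k : ℝ) - 1 ≠ 0 := by linarith
        have : (N : ℝ) - k ≠ 0 := by linarith
        rw [show π = N * h / 2 by linarith]
        field_simp

noncomputable def lebesgueFunction (n N : ℕ) (θ : ℝ) : ℝ :=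
  ∑ k ∈ range N, ‖dirichletKernel n (θ - 2 * π * k / N)‖

lemma lebesgueFunction_periodic (n : ℕ) {N : ℕ} (hN : N ≠ 0) :
    Periodic (lebesgueFunction n N) (2 * π / N) := by
  intro θ
  obtain ⟨M, rfl⟩ := Nat.exists_eq_succ_of_ne_zero hN
  rw [lebesgueFunction, lebesgueFunction, sum_range_succ', sum_range_succ]
  congr 1
  · refine sum_congr rfl fun k _ => ?_
    congr 2; push_cast; ring
  · conv_rhs => rw [← dirichletKernel_periodic n]
    congr 2; push_cast; field_simp; ring

lemma sum_Ico_two_inv_sub_one (N : ℕ) :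
    ∑ k ∈ Ico 2 N, ((k : ℝ) - 1)⁻¹ = harmonic (N - 2) := by
  rw [sum_Ico_eq_sum_range, harmonic]
  push_cast
  refine sum_congr rfl fun j _ => ?_
  ring_nf

lemma sum_Ico_two_inv_sub (N : ℕ) :
    ∑ k ∈ Ico 2 N, ((N : ℝ) - k)⁻¹ = harmonic (N - 2) := by
  rw [sum_Ico_eq_sum_range, harmonic, ← sum_range_reflect]
  push_cast
  refine sum_congr rfl fun j hj => ?_
  rw [mem_range] at hj
  rw [Nat.cast_sub (by omega), Nat.cast_sub (by omega), Nat.cast_sub (by omega)]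
  push_cast; ring_nf

lemma lebesgueFunction_le_of_mem_Icc {n N : ℕ} (hN : 2 * n < N) {θ : ℝ}
    (hθ : θ ∈ Set.Icc 0 (2 * π / N)) :
    lebesgueFunction n N θ ≤ N * (2 + harmonic (N - 2)) := by
  have hcover : range N ⊆ range 2 ∪ Ico 2 N := by
    intro k; simp only [mem_union, mem_range, mem_Ico]; omega
  have hdisj : Disjoint (range 2) (Ico 2 N) := by
    rw [disjoint_left]; intro k; simp only [mem_range, mem_Ico]; omega
  -- the nodes `k = 0, 1` may be arbitrarily close to `θ`: only the trivial bound holds there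
  have hnear (k : ℕ) : ‖dirichletKernel n (θ - 2 * π * k / N)‖ ≤ N :=
    (norm_dirichletKernel_le n _).trans (by exact_mod_cast hN)
  calc lebesgueFunction n N θ
      ≤ ∑ k ∈ range 2 ∪ Ico 2 N, ‖dirichletKernel n (θ - 2 * π * k / N)‖ :=
        sum_le_sum_of_subset_of_nonneg hcover fun _ _ _ => norm_nonneg _
    _ ≤ ∑ k ∈ range 2, (N : ℝ) + ∑ k ∈ Ico 2 N, N / 2 * (((k : ℝ) - 1)⁻¹ + ((N : ℝ) - k)⁻¹) := by
        rw [sum_union hdisj]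
        exact add_le_add (sum_le_sum fun k _ => hnear k)
          (sum_le_sum fun k hk => norm_dirichletKernel_sub_grid_le n hθ hk)
    _ = N * (2 + harmonic (N - 2)) := by
        rw [← mul_sum, sum_add_distrib, sum_Ico_two_inv_sub_one, sum_Ico_two_inv_sub]
        simp; ring

lemma lebesgueFunction_le {n N : ℕ} (hN : 2 * n < N) (θ : ℝ) :
    lebesgueFunction n N θ ≤ N * (2 + harmonic (N - 2)) := by
  obtain ⟨y, hy, hθy⟩ := (lebesgueFunction_periodic n (N := N) (by omega)).exists_mem_Ico₀
    (div_pos Real.two_pi_pos (Nat.cast_pos.2 (by omega))) θ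
  rw [hθy]
  exact lebesgueFunction_le_of_mem_Icc hN (Set.Ico_subset_Icc_self hy)

lemma norm_le_of_mem_dirichletReproduced {n N : ℕ} (hN : 2 * n < N) {f : ℝ → ℂ}
    (hf : f ∈ dirichletReproduced n N) {M : ℝ} (hM : ∀ k < N, ‖f (2 * π * k / N)‖ ≤ M) (θ : ℝ) :
    ‖f θ‖ ≤ (2 + harmonic (N - 2)) * M := by
  have hNpos : (0 : ℝ) < N := by exact_mod_cast (by omega : 0 < N)
  have hM₀ : 0 ≤ M := (norm_nonneg _).trans (hM 0 (by omega))
  suffices N * ‖f θ‖ ≤ N * ((2 + harmonic (N - 2)) * M) from le_of_mul_le_mul_left this hNpos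
  calc N * ‖f θ‖ = ‖∑ k ∈ range N, f (2 * π * k / N) * dirichletKernel n (θ - 2 * π * k / N)‖ := by
        rw [hf θ, norm_mul, norm_natCast]
    _ ≤ ∑ k ∈ range N, M * ‖dirichletKernel n (θ - 2 * π * k / N)‖ := by
        refine (norm_sum_le _ _).trans (sum_le_sum fun k hk => ?_)
        rw [norm_mul]
        exact mul_le_mul_of_nonneg_right (hM k (mem_range.1 hk)) (norm_nonneg _)
    _ = M * lebesgueFunction n N θ := by rw [lebesgueFunction, mul_sum]
    _ ≤ M * (N * (2 + harmonic (N - 2))) := mul_le_mul_of_nonneg_left (lebesgueFunction_le hN θ) hM₀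
    _ = N * ((2 + harmonic (N - 2)) * M) := by ring

lemma two_add_harmonic_two_mul_le_log {n : ℕ} (hn : 2 ≤ n) :
    2 + (harmonic (2 * n) : ℝ) ≤ 8 * Real.log n := by
  have hn' : (2 : ℝ) ≤ n := by exact_mod_cast hn
  have hlog2 : (0.6931471803 : ℝ) < Real.log 2 := Real.log_two_gt_d9
  have hlogn : Real.log 2 ≤ Real.log n := Real.log_le_log two_pos hn'
  have hlog2n : Real.log (2 * n : ℕ) = Real.log 2 + Real.log n := by
    push_cast; exact Real.log_mul two_ne_zero (by positivity)
  linarith [harmonic_le_one_add_log (2 * n)]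

end TrigInterpolation

open TrigInterpolation

/-- Equispaced angles form a weakly admissible mesh for trigonometric polynomials:
there is `c > 0` such that for every `n ≥ 2` and every real trigonometric polynomial
`q(θ) = a₀ + Σ_{k=1}^n (a_k cos kθ + b_k sin kθ)` of degree at most `n`,
`sup_{θ ∈ [0,2π]} |q(θ)| ≤ c · log n · max_{0 ≤ k ≤ 2n+1} |q(kπ/(n+1))|`. -/
theorem trigPoly_equispaced_WAM :
    ∃ c : ℝ, 0 < c ∧
      ∀ n : ℕ, 2 ≤ n →
        ∀ a b : ℕ → ℝ,
          ∀ q : ℝ → ℝ,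
            (∀ θ : ℝ, q θ = a 0 + ∑ k ∈ Finset.Icc 1 n,
                (a k * Real.cos (k * θ) + b k * Real.sin (k * θ))) →
              ∀ M : ℝ, (∀ k : ℕ, k ≤ 2 * n + 1 → |q (k * Real.pi / (n + 1))| ≤ M) →
                ∀ θ ∈ Set.Icc (0 : ℝ) (2 * Real.pi), |q θ| ≤ c * Real.log n * M := by
  refine ⟨8, by norm_num, fun n hn a b q hq M hM θ _ => ?_⟩
  have hN : 2 * n < 2 * n + 2 := by omega
  have hsamples : ∀ k < 2 * n + 2, ‖(q (2 * π * k / ↑(2 * n + 2)) : ℂ)‖ ≤ M := by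
    intro k hk
    rw [norm_real, Real.norm_eq_abs]
    convert hM k (by omega) using 3
    push_cast; field_simp
  have hbound := norm_le_of_mem_dirichletReproduced hN (trigPoly_mem_dirichletReproduced hN hq)
    hsamples θ
  rw [norm_real, Real.norm_eq_abs, show 2 * n + 2 - 2 = 2 * n by omega] at hbound
  have hM₀ : 0 ≤ M := (abs_nonneg _).trans (hM 0 (by omega))
  calc |q θ| ≤ (2 + harmonic (2 * n)) * M := hbound
    _ ≤ 8 * Real.log n * M := by gcongr; exact two_add_harmonic_two_mul_le_log hn
end

section
/- (Product property of WAMs, P5.) Let K₁ ⊂ ℝ^{d₁} and K₂ ⊂ ℝ^{d₂} be compact sets, let n be a natural number, and let A ⊂ K₁ and B ⊂ K₂ be finite sets and C₁, C₂ > 0 constants such that ‖p‖_{K₁} ≤ C₁·‖p‖_{A} for every real polynomial p in d₁ variables of total degree at most n, and ‖p‖_{K₂} ≤ C₂·‖p‖_{B} for every real polynomial p in d₂ variables of total degree at most n. Then for every real polynomial p in d₁ + d₂ variables of total degree at most n, ‖p‖_{K₁ × K₂} ≤ C₁·C₂·‖p‖_{A × B}. -/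
/-!
Substituting constants for some variables never raises the total degree, so every slice of `p`
is again a polynomial of degree at most `n`. For `a ∈ A`, the slice `y ↦ p(a, y)` is bounded by `M`
on `B`, hence by `C₂ M` on `K₂`. Then for `y ∈ K₂`, the slice `x ↦ p(x, y)` is bounded by `C₂ M`
on `A`, hence by `C₁ C₂ M` on `K₁`.
-/

theorem abs_le_mul_mul_of_slices {α β : Type*} (f : α → β → ℝ) {A K₁ : Set α} {B K₂ : Set β}
    {C₁ C₂ M : ℝ}
    (h₁ : ∀ y M, (∀ a ∈ A, |f a y| ≤ M) → ∀ x ∈ K₁, |f x y| ≤ C₁ * M)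
    (h₂ : ∀ x M, (∀ b ∈ B, |f x b| ≤ M) → ∀ y ∈ K₂, |f x y| ≤ C₂ * M)
    (hM : ∀ a ∈ A, ∀ b ∈ B, |f a b| ≤ M) :
    ∀ x ∈ K₁, ∀ y ∈ K₂, |f x y| ≤ C₁ * C₂ * M := by
  intro x hx y hy
  have h_row : ∀ a ∈ A, |f a y| ≤ C₂ * M := fun a ha => h₂ a M (hM a ha) y hy
  simpa only [mul_assoc] using h₁ y (C₂ * M) h_row x hx

namespace MvPolynomial

variable {R σ τ : Type*} [CommSemiring R]

theorem totalDegree_X_le (j : σ) : (X j : MvPolynomial σ R).totalDegree ≤ 1 := by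
  simpa [X] using totalDegree_monomial_le (R := R) (Finsupp.single j 1) 1

theorem eval_bind₁ (x : τ → R) (g : σ → MvPolynomial τ R) (p : MvPolynomial σ R) :
    eval x (bind₁ g p) = eval (fun i => eval x (g i)) p :=
  eval₂Hom_bind₁ _ _ _ _

theorem totalDegree_bind₁_le {f : σ → MvPolynomial τ R} (hf : ∀ i, (f i).totalDegree ≤ 1)
    (p : MvPolynomial σ R) : (bind₁ f p).totalDegree ≤ p.totalDegree := by
  conv_lhs => rw [p.as_sum, map_sum]
  refine totalDegree_finsetSum_le fun d hd => ?_
  rw [bind₁_monomial]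
  calc (C (coeff d p) * ∏ i ∈ d.support, f i ^ d i).totalDegree
      ≤ ∑ i ∈ d.support, d i * (f i).totalDegree := by
        refine (totalDegree_mul _ _).trans ?_
        rw [totalDegree_C, zero_add]
        exact (totalDegree_finsetProd _ _).trans
          (Finset.sum_le_sum fun i _ => totalDegree_pow _ _)
    _ ≤ ∑ i ∈ d.support, d i :=
        Finset.sum_le_sum fun i _ => mul_le_of_le_one_right (Nat.zero_le _) (hf i)
    _ ≤ p.totalDegree := le_totalDegree hd

variable {m k : ℕ}

theorem exists_totalDegree_le_eval_append_left (p : MvPolynomial (Fin (m + k)) R)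
    (y : Fin k → R) :
    ∃ q : MvPolynomial (Fin m) R, q.totalDegree ≤ p.totalDegree ∧
      ∀ x, eval x q = eval (Fin.append x y) p := by
  refine ⟨bind₁ (Fin.append X (C ∘ y)) p, totalDegree_bind₁_le (fun i => ?_) p, fun x => ?_⟩
  · refine Fin.addCases (fun j => ?_) (fun j => ?_) i <;> simp [totalDegree_X_le]
  · rw [eval_bind₁]
    congr 2
    funext i
    refine Fin.addCases (fun j => ?_) (fun j => ?_) i <;> simp

theorem exists_totalDegree_le_eval_append_right (p : MvPolynomial (Fin (m + k)) R)
    (x : Fin m → R) :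
    ∃ q : MvPolynomial (Fin k) R, q.totalDegree ≤ p.totalDegree ∧
      ∀ y, eval y q = eval (Fin.append x y) p := by
  refine ⟨bind₁ (Fin.append (C ∘ x) X) p, totalDegree_bind₁_le (fun i => ?_) p, fun y => ?_⟩
  · refine Fin.addCases (fun j => ?_) (fun j => ?_) i <;> simp [totalDegree_X_le]
  · rw [eval_bind₁]
    congr 2
    funext i
    refine Fin.addCases (fun j => ?_) (fun j => ?_) i <;> simp

end MvPolynomial

theorem WAM_product_general (d₁ d₂ n : ℕ) (K₁ : Set (Fin d₁ → ℝ)) (K₂ : Set (Fin d₂ → ℝ))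
    (A : Finset (Fin d₁ → ℝ)) (B : Finset (Fin d₂ → ℝ))
    (C₁ C₂ : ℝ)
    (h₁ : ∀ p : MvPolynomial (Fin d₁) ℝ, p.totalDegree ≤ n →
      ∀ M : ℝ, (∀ a ∈ A, |MvPolynomial.eval a p| ≤ M) →
        ∀ x ∈ K₁, |MvPolynomial.eval x p| ≤ C₁ * M)
    (h₂ : ∀ p : MvPolynomial (Fin d₂) ℝ, p.totalDegree ≤ n →
      ∀ M : ℝ, (∀ b ∈ B, |MvPolynomial.eval b p| ≤ M) →
        ∀ y ∈ K₂, |MvPolynomial.eval y p| ≤ C₂ * M) :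
    ∀ p : MvPolynomial (Fin (d₁ + d₂)) ℝ, p.totalDegree ≤ n →
      ∀ M : ℝ, (∀ a ∈ A, ∀ b ∈ B, |MvPolynomial.eval (Fin.append a b) p| ≤ M) →
        ∀ x ∈ K₁, ∀ y ∈ K₂,
          |MvPolynomial.eval (Fin.append x y) p| ≤ C₁ * C₂ * M := by
  intro p hp M hM
  refine abs_le_mul_mul_of_slices (A := A) (B := B)
    (fun x y => MvPolynomial.eval (Fin.append x y) p)
    (fun y M' hM' x hx => ?_) (fun x M' hM' y hy => ?_) hM
  · obtain ⟨q, hq_deg, hq_eval⟩ := MvPolynomial.exists_totalDegree_le_eval_append_left p y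
    simp only [← hq_eval] at hM' ⊢
    exact h₁ q (hq_deg.trans hp) M' hM' x hx
  · obtain ⟨q, hq_deg, hq_eval⟩ := MvPolynomial.exists_totalDegree_le_eval_append_right p x
    simp only [← hq_eval] at hM' ⊢
    exact h₂ q (hq_deg.trans hp) M' hM' y hy

/-- Product property of weakly admissible meshes (P5): if `‖p‖_{K₁} ≤ C₁‖p‖_A` for all
polynomials in `d₁` variables of total degree at most `n`, and `‖p‖_{K₂} ≤ C₂‖p‖_B`
for all polynomials in `d₂` variables of total degree at most `n`, then
`‖p‖_{K₁×K₂} ≤ C₁C₂‖p‖_{A×B}` for all polynomials in `d₁+d₂` variables of total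
degree at most `n`. -/
theorem WAM_product (d₁ d₂ n : ℕ) (K₁ : Set (Fin d₁ → ℝ)) (K₂ : Set (Fin d₂ → ℝ))
    (hK₁ : IsCompact K₁) (hK₂ : IsCompact K₂)
    (A : Finset (Fin d₁ → ℝ)) (B : Finset (Fin d₂ → ℝ))
    (hA : ↑A ⊆ K₁) (hB : ↑B ⊆ K₂)
    (C₁ C₂ : ℝ) (hC₁ : 0 < C₁) (hC₂ : 0 < C₂)
    (h₁ : ∀ p : MvPolynomial (Fin d₁) ℝ, p.totalDegree ≤ n →
      ∀ M : ℝ, (∀ a ∈ A, |MvPolynomial.eval a p| ≤ M) →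
        ∀ x ∈ K₁, |MvPolynomial.eval x p| ≤ C₁ * M)
    (h₂ : ∀ p : MvPolynomial (Fin d₂) ℝ, p.totalDegree ≤ n →
      ∀ M : ℝ, (∀ b ∈ B, |MvPolynomial.eval b p| ≤ M) →
        ∀ y ∈ K₂, |MvPolynomial.eval y p| ≤ C₂ * M) :
    ∀ p : MvPolynomial (Fin (d₁ + d₂)) ℝ, p.totalDegree ≤ n →
      ∀ M : ℝ, (∀ a ∈ A, ∀ b ∈ B, |MvPolynomial.eval (Fin.append a b) p| ≤ M) →
        ∀ x ∈ K₁, ∀ y ∈ K₂,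
          |MvPolynomial.eval (Fin.append x y) p| ≤ C₁ * C₂ * M :=
  WAM_product_general d₁ d₂ n K₁ K₂ A B C₁ C₂ h₁ h₂
end

section
/- (Property P10, Lebesgue constant of Fekete points extracted from a WAM.) Let K ⊂ ℝ^d be compact, n a natural number, N = dim P_n^d, and let A_n ⊂ K be a finite set and C > 0 a constant such that ‖p‖_K ≤ C·‖p‖_{A_n} for every p ∈ P_n^d. Fix a basis p_1,...,p_N of P_n^d, and suppose ξ_1, ..., ξ_N ∈ A_n maximize |det(p_j(x_i))| over all N-tuples of points of A_n, with nonzero maximum. Then {ξ_1,...,ξ_N} is unisolvent for P_n^d, each elementary Lagrange polynomial satisfies ‖l_j‖_K ≤ C·‖l_j‖_{A_n} ≤ C, and the Lebesgue constant of interpolation at ξ_1,...,ξ_N satisfies Λ_n = sup_{x∈K} Σ_{j=1}^N |l_j(x)| ≤ N·C. -/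
open Matrix


/-- Property P10: Lebesgue constant of (approximate) Fekete points extracted from a
weakly admissible mesh. Let `A_n ⊆ K` be a finite mesh with
`‖p‖_K ≤ C·‖p‖_{A_n}` for all `p ∈ P_n^d`, `N = dim P_n^d`, `b_1,…,b_N` a basis of
`P_n^d`, and let `ξ_1,…,ξ_N ∈ A_n` maximize the absolute Vandermonde determinant
`|det(b_j(x_i))|` over `N`-tuples from `A_n`, with nonzero maximum. Then the `ξ_j`
are unisolvent, each elementary Lagrange polynomial satisfies
`‖l_j‖_{A_n} ≤ 1` and `‖l_j‖_K ≤ C`, and the Lebesgue constant satisfies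
`Λ_n = sup_{x∈K} Σ_j |l_j(x)| ≤ N·C`. -/
theorem fekete_from_WAM_lebesgue_bound (d n N : ℕ) (K : Set (Fin d → ℝ))
    (hK : IsCompact K)
    (hN : N = Module.finrank ℝ (MvPolynomial.restrictTotalDegree (Fin d) ℝ n))
    (A : Finset (Fin d → ℝ)) (hA : ↑A ⊆ K) (C : ℝ) (hC : 0 < C)
    (hWAM : ∀ p : MvPolynomial (Fin d) ℝ, p.totalDegree ≤ n →
      ∀ M : ℝ, (∀ a ∈ A, |MvPolynomial.eval a p| ≤ M) →
        ∀ x ∈ K, |MvPolynomial.eval x p| ≤ C * M)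
    (b : Fin N → MvPolynomial (Fin d) ℝ)
    (hbdeg : ∀ j, (b j).totalDegree ≤ n)
    (hbind : LinearIndependent ℝ b)
    (hbspan : ∀ q : MvPolynomial (Fin d) ℝ, q.totalDegree ≤ n →
      ∃ c : Fin N → ℝ, q = ∑ j, c j • b j)
    (ξ : Fin N → (Fin d → ℝ)) (hξA : ∀ i, ξ i ∈ A)
    (hmax : ∀ x : Fin N → (Fin d → ℝ), (∀ i, x i ∈ A) →
      |Matrix.det (Matrix.of fun i j => MvPolynomial.eval (x i) (b j))| ≤
        |Matrix.det (Matrix.of fun i j => MvPolynomial.eval (ξ i) (b j))|)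
    (hne : Matrix.det (Matrix.of fun i j => MvPolynomial.eval (ξ i) (b j)) ≠ 0) :
    ∃ l : Fin N → MvPolynomial (Fin d) ℝ,
      (∀ j, (l j).totalDegree ≤ n) ∧
      (∀ i j, MvPolynomial.eval (ξ j) (l i) = if i = j then (1 : ℝ) else 0) ∧
      (∀ q : MvPolynomial (Fin d) ℝ, q.totalDegree ≤ n →
        q = ∑ j, MvPolynomial.eval (ξ j) q • l j) ∧
      (∀ j, ∀ a ∈ A, |MvPolynomial.eval a (l j)| ≤ 1) ∧
      (∀ j, ∀ x ∈ K, |MvPolynomial.eval x (l j)| ≤ C) ∧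
      (∀ x ∈ K, ∑ j, |MvPolynomial.eval x (l j)| ≤ (N : ℝ) * C) := by
  classical
  set V : Matrix (Fin N) (Fin N) ℝ :=
    Matrix.of fun i j => MvPolynomial.eval (ξ i) (b j) with hV
  have hdet : IsUnit V.det := isUnit_iff_ne_zero.mpr hne
  have hVinv : V⁻¹ * V = 1 := Matrix.nonsing_inv_mul V hdet
  have hVinv' : V * V⁻¹ = 1 := Matrix.mul_nonsing_inv V hdet
  set l : Fin N → MvPolynomial (Fin d) ℝ := fun i => ∑ j, (V⁻¹ j i) • b j with hl
  have heval : ∀ i x, MvPolynomial.eval x (l i) =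
      ∑ j, V⁻¹ j i * MvPolynomial.eval x (b j) := by
    intro i x
    simp [hl, map_sum, MvPolynomial.smul_eval]
  -- cramer identity
  have hcram : ∀ (i : Fin N) (v : Fin N → ℝ),
      ∑ j, V⁻¹ j i * v j = V.det⁻¹ * (V.updateRow i v).det := by
    intro i v
    have hadj : ∀ j, V⁻¹ j i = V.det⁻¹ * V.adjugate j i := by
      intro j
      rw [Matrix.inv_def]
      simp [Matrix.smul_apply, smul_eq_mul, Ring.inverse_eq_inv']
    have hcr : (Matrix.cramer Vᵀ) v i = (V.updateRow i v).det := by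
      rw [Matrix.cramer_apply, Matrix.updateCol_transpose, Matrix.det_transpose]
    have hcr2 : (Matrix.cramer Vᵀ) v i = ∑ j, V.adjugate j i * v j := by
      rw [Matrix.cramer_eq_adjugate_mulVec]
      simp [Matrix.mulVec, dotProduct, ← Matrix.adjugate_transpose]
    calc ∑ j, V⁻¹ j i * v j = V.det⁻¹ * ∑ j, V.adjugate j i * v j := by
          rw [Finset.mul_sum]; exact Finset.sum_congr rfl fun j _ => by rw [hadj]; ring
      _ = V.det⁻¹ * (V.updateRow i v).det := by rw [← hcr2, hcr]
  -- ‖l_i‖_A ≤ 1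
  have hA1 : ∀ i, ∀ a ∈ A, |MvPolynomial.eval a (l i)| ≤ 1 := by
    intro i a ha
    rw [heval, hcram]
    have hup : V.updateRow i (fun j => MvPolynomial.eval a (b j)) =
        Matrix.of fun k j => MvPolynomial.eval (Function.update ξ i a k) (b j) := by
      ext k j
      by_cases hk : k = i
      · subst hk; simp [Matrix.updateRow_self]
      · simp [Matrix.updateRow_ne hk, Function.update_of_ne hk, hV]
    have hle := hmax (Function.update ξ i a) (by
      intro k
      by_cases hk : k = i
      · subst hk; simpa using ha
      · simpa [Function.update_of_ne hk] using hξA k)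
    rw [← hup] at hle
    rw [abs_mul, abs_inv]
    have hpos : 0 < |V.det| := abs_pos.mpr hne
    rw [inv_mul_le_iff₀ hpos, mul_one]
    exact hle
  -- δ property
  have hdelta : ∀ i j, MvPolynomial.eval (ξ j) (l i) = if i = j then (1 : ℝ) else 0 := by
    intro i j
    rw [heval]
    have : ∑ k, V⁻¹ k i * V j k = (V * V⁻¹) j i := by
      simp [Matrix.mul_apply, mul_comm]
    simp only [hV, Matrix.of_apply] at this ⊢
    rw [this, hVinv', Matrix.one_apply]
    simp [eq_comm]
  -- degrees
  have hdeg : ∀ i, (l i).totalDegree ≤ n := by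
    intro i
    refine (MvPolynomial.totalDegree_finset_sum _ _).trans (Finset.sup_le fun j _ => ?_)
    exact (MvPolynomial.totalDegree_smul_le _ _).trans (hbdeg j)
  -- interpolation
  have hinterp : ∀ q : MvPolynomial (Fin d) ℝ, q.totalDegree ≤ n →
      q = ∑ j, MvPolynomial.eval (ξ j) q • l j := by
    intro q hq
    obtain ⟨c, hc⟩ := hbspan q hq
    have hevq : ∀ j, MvPolynomial.eval (ξ j) q = ∑ k, c k * V j k := by
      intro j; rw [hc]; simp [map_sum, MvPolynomial.smul_eval, hV]
    calc q = ∑ m, c m • b m := hc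
      _ = ∑ j, MvPolynomial.eval (ξ j) q • l j := by
          simp only [hl, Finset.smul_sum, smul_smul]
          rw [Finset.sum_comm]
          refine Finset.sum_congr rfl fun m _ => ?_
          have : ∑ j, MvPolynomial.eval (ξ j) q * V⁻¹ m j = c m := by
            simp only [hevq, Finset.sum_mul]
            rw [Finset.sum_comm]
            have h1 : ∀ k, ∑ j, c k * V j k * V⁻¹ m j = c k * (V⁻¹ * V) m k := by
              intro k
              rw [Matrix.mul_apply, Finset.mul_sum]
              exact Finset.sum_congr rfl fun j _ => by ring
            simp only [h1, hVinv, Matrix.one_apply]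
            simp
          rw [← Finset.sum_smul, this]
  -- K bounds
  have hKC : ∀ i, ∀ x ∈ K, |MvPolynomial.eval x (l i)| ≤ C := by
    intro i x hx
    have := hWAM (l i) (hdeg i) 1 (hA1 i) x hx
    simpa using this
  refine ⟨l, hdeg, hdelta, hinterp, hA1, hKC, ?_⟩
  intro x hx
  calc ∑ j, |MvPolynomial.eval x (l j)| ≤ ∑ _j : Fin N, C :=
        Finset.sum_le_sum fun j _ => hKC j x hx
    _ = (N : ℝ) * C := by simp [mul_comm]
end

section
/- (Least-squares error estimate on a WAM, P9.) Let K ⊂ ℝ^d be compact, n a natural number, and let A_n = {a_1, ..., a_M} ⊂ K be a finite set of M points and C > 0 a constant such that ‖p‖_K ≤ C·‖p‖_{A_n} for every real polynomial p of total degree at most n, with M ≥ dim P_n^d and such that the evaluation map P_n^d → ℝ^M is injective. Let f : K → ℝ be continuous and let L_{A_n}f ∈ P_n^d be the discrete least-squares approximant, i.e. the (unique) polynomial of total degree at most n minimizing Σ_{i=1}^M (f(a_i) − q(a_i))² over q ∈ P_n^d. Then ‖f − L_{A_n}f‖_K ≤ (1 + C·(1 + √M)) · inf{‖f − p‖_K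 : p ∈ P_n^d}. -/
/-- Property P9: near optimality of discrete least-squares approximation on a weakly
admissible mesh. Let `A = {a_1,…,a_M} ⊆ K` be a mesh with `‖p‖_K ≤ C·‖p‖_A` for all
polynomials `p` of total degree at most `n`, with `M = card A ≥ dim P_n^d` and the
evaluation map on `A` injective on `P_n^d`. If `f : K → ℝ` is continuous and `Lf` is
the discrete least-squares polynomial of degree at most `n` of `f` on `A`, then
`‖f − Lf‖_K ≤ (1 + C(1 + √M)) · inf{‖f − p‖_K : p ∈ P_n^d}`. -/
theorem leastSquares_WAM_error (d n : ℕ) (K : Set (Fin d → ℝ)) (hK : IsCompact K)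
    (A : Finset (Fin d → ℝ)) (hA : ↑A ⊆ K) (C : ℝ) (hC : 0 < C)
    (hWAM : ∀ p : MvPolynomial (Fin d) ℝ, p.totalDegree ≤ n →
      ∀ M : ℝ, (∀ a ∈ A, |MvPolynomial.eval a p| ≤ M) →
        ∀ x ∈ K, |MvPolynomial.eval x p| ≤ C * M)
    (hcard : Module.finrank ℝ (MvPolynomial.restrictTotalDegree (Fin d) ℝ n) ≤ A.card)
    (hinj : ∀ p : MvPolynomial (Fin d) ℝ, p.totalDegree ≤ n →
      (∀ a ∈ A, MvPolynomial.eval a p = 0) → p = 0)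
    (f : (Fin d → ℝ) → ℝ) (hf : ContinuousOn f K)
    (Lf : MvPolynomial (Fin d) ℝ) (hLfdeg : Lf.totalDegree ≤ n)
    (hLf : ∀ q : MvPolynomial (Fin d) ℝ, q.totalDegree ≤ n →
      ∑ a ∈ A, (f a - MvPolynomial.eval a Lf) ^ 2 ≤
        ∑ a ∈ A, (f a - MvPolynomial.eval a q) ^ 2) :
    ∀ p : MvPolynomial (Fin d) ℝ, p.totalDegree ≤ n →
      ∀ E : ℝ, (∀ x ∈ K, |f x - MvPolynomial.eval x p| ≤ E) →
        ∀ x ∈ K, |f x - MvPolynomial.eval x Lf| ≤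
          (1 + C * (1 + Real.sqrt (A.card))) * E := by
  intro p hp E hE x hx
  have hE0 : 0 ≤ E := le_trans (abs_nonneg _) (hE x hx)
  set s : ℝ := Real.sqrt A.card with hs
  have hs0 : 0 ≤ s := Real.sqrt_nonneg _
  -- sum bound
  have hsum : ∑ b ∈ A, (f b - MvPolynomial.eval b Lf) ^ 2 ≤ (A.card : ℝ) * E ^ 2 := by
    calc ∑ b ∈ A, (f b - MvPolynomial.eval b Lf) ^ 2
        ≤ ∑ b ∈ A, (f b - MvPolynomial.eval b p) ^ 2 := hLf p hp
      _ ≤ ∑ b ∈ A, E ^ 2 := by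
          refine Finset.sum_le_sum fun b hb => ?_
          have h := hE b (hA hb)
          nlinarith [abs_nonneg (f b - MvPolynomial.eval b p),
            sq_abs (f b - MvPolynomial.eval b p)]
      _ = (A.card : ℝ) * E ^ 2 := by rw [Finset.sum_const, nsmul_eq_mul]
  -- pointwise bound on A for p - Lf
  have key : ∀ a ∈ A, |MvPolynomial.eval a (p - Lf)| ≤ E + s * E := by
    intro a ha
    have h1 : |f a - MvPolynomial.eval a p| ≤ E := hE a (hA ha)
    have h2 : (f a - MvPolynomial.eval a Lf) ^ 2 ≤ (A.card : ℝ) * E ^ 2 :=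
      le_trans (Finset.single_le_sum (f := fun b => (f b - MvPolynomial.eval b Lf) ^ 2) (fun b _ => sq_nonneg _) ha) hsum
    have h3 : |f a - MvPolynomial.eval a Lf| ≤ s * E := by
      have := Real.sqrt_le_sqrt h2
      rwa [Real.sqrt_sq_eq_abs, Real.sqrt_mul (Nat.cast_nonneg _),
        Real.sqrt_sq hE0] at this
    have heq : MvPolynomial.eval a (p - Lf)
        = (MvPolynomial.eval a p - f a) + (f a - MvPolynomial.eval a Lf) := by
      rw [map_sub]; ring
    rw [heq]
    calc |(MvPolynomial.eval a p - f a) + (f a - MvPolynomial.eval a Lf)|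
        ≤ |MvPolynomial.eval a p - f a| + |f a - MvPolynomial.eval a Lf| := abs_add_le _ _
      _ ≤ E + s * E := by rw [abs_sub_comm]; exact add_le_add h1 h3
  have hdeg : (p - Lf).totalDegree ≤ n := by
    rw [sub_eq_add_neg]
    refine le_trans (MvPolynomial.totalDegree_add _ _) ?_
    rw [MvPolynomial.totalDegree_neg]
    exact max_le hp hLfdeg
  have hbd := hWAM (p - Lf) hdeg (E + s * E) key x hx
  have heq : f x - MvPolynomial.eval x Lf
      = (f x - MvPolynomial.eval x p) + MvPolynomial.eval x (p - Lf) := by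
    rw [map_sub]; ring
  calc |f x - MvPolynomial.eval x Lf|
      ≤ |f x - MvPolynomial.eval x p| + |MvPolynomial.eval x (p - Lf)| := by
        rw [heq]; exact abs_add_le _ _
    _ ≤ E + C * (E + s * E) := add_le_add (hE x hx) hbd
    _ = (1 + C * (1 + s)) * E := by ring
end

section
/- (Orthonormality of ridge Chebyshev polynomials on the disk.) For integers k, k' ≥ 0 and 0 ≤ j ≤ k, 0 ≤ j' ≤ k', set θ_{j,k} = jπ/(k+1), and let U_m denote the Chebyshev polynomial of the second kind of degree m. Then (1/π) ∫∫_D U_k(x cos θ_{j,k} + y sin θ_{j,k}) · U_{k'}(x cos θ_{j',k'} + y sin θ_{j',k'}) dx dy = 1 if (j,k) = (j',k') and = 0 otherwise, where D is the closed unit disk in ℝ². In particular, the family {U_k(θ_{j,k}; x, y) : k ≥ 0, 0 ≤ j ≤ k} is orthonormal on D with respect to the measure ω(x,y) = 1/π. -/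
/-!
Rotating the disk by `θ_{j,k}` turns the first ridge into `U_k(x)` and the second into the ridge
in direction `γ = θ_{j',k'} - θ_{j,k}`. Along the vertical chord of the disk at `x = cos t`, an
antiderivative of the second ridge is `T_{k'+1}/((k'+1) sin γ)`, whose values at the endpoints are
`T_{k'+1}(cos (t ∓ γ))`; so the chord integral is `2 sin ((k'+1) t) U_{k'}(cos γ)/(k'+1)`. Since
`U_k(cos t) sin t = sin ((k+1) t)`, orthogonality of the sines on `[0, π]` gives
`∫_D = δ_{k k'} π U_k(cos γ)/(k+1)`. Finally `γ = (j' - j)π/(k+1)` is a zero of `U_k` unless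
`j = j'`, and `U_k(1) = k + 1`.
-/

open Real MeasureTheory Set Polynomial Polynomial.Chebyshev

lemma integral_cos_int_mul (l : ℤ) :
    ∫ t in (0 : ℝ)..π, cos (l * t) = if l = 0 then π else 0 := by
  split_ifs with hl
  · simp [hl]
  · have hl' : (l : ℝ) ≠ 0 := Int.cast_ne_zero.mpr hl
    rw [intervalIntegral.integral_comp_mul_left (fun t => cos t) hl', integral_cos]
    simp [sin_int_mul_pi]

lemma integral_sin_nat_succ_mul_mul_sin (m n : ℕ) :
    ∫ t in (0 : ℝ)..π, sin ((m + 1) * t) * sin ((n + 1) * t) = if m = n then π / 2 else 0 := by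
  have hprod : ∀ t : ℝ, sin ((m + 1) * t) * sin ((n + 1) * t) =
      (cos (((m - n : ℤ) : ℝ) * t) - cos (((m + n + 2 : ℤ) : ℝ) * t)) / 2 := fun t => by
    push_cast
    rw [show ((m : ℝ) - n) * t = (m + 1) * t - (n + 1) * t by ring,
      show ((m : ℝ) + n + 2) * t = (m + 1) * t + (n + 1) * t by ring, cos_sub, cos_add]
    ring
  simp_rw [hprod]
  rw [intervalIntegral.integral_div,
    intervalIntegral.integral_sub (by apply Continuous.intervalIntegrable; fun_prop)
      (by apply Continuous.intervalIntegrable; fun_prop),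
    integral_cos_int_mul, integral_cos_int_mul, if_neg (show (m + n + 2 : ℤ) ≠ 0 by omega)]
  simp only [sub_eq_zero, Nat.cast_inj, sub_zero]
  split_ifs <;> simp

lemma integral_eval_U (n : ℕ) (a b : ℝ) :
    ∫ x in a..b, (U ℝ n).eval x = ((T ℝ (n + 1)).eval b - (T ℝ (n + 1)).eval a) / (n + 1) := by
  have hderiv : ∀ x : ℝ,
      HasDerivAt (fun x => (T ℝ (n + 1)).eval x / (n + 1)) ((U ℝ n).eval x) x := by
    intro x
    refine (((T ℝ (n + 1)).hasDerivAt x).div_const ((n : ℝ) + 1)).congr_deriv ?_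
    rw [T_derivative_eq_U]
    simp only [add_sub_cancel_right, eval_mul, eval_intCast]
    push_cast
    field_simp
  rw [intervalIntegral.integral_eq_sub_of_hasDerivAt (fun x _ => hderiv x)
    ((U ℝ n).continuous.intervalIntegrable _ _), sub_div]

lemma integral_eval_U_affine (n : ℕ) (a b c d : ℝ) (hd : d ≠ 0) :
    ∫ y in a..b, (U ℝ n).eval (c + y * d) =
      ((T ℝ (n + 1)).eval (c + b * d) - (T ℝ (n + 1)).eval (c + a * d)) / ((n + 1) * d) := by
  simp_rw [add_comm c, mul_comm _ d]
  rw [intervalIntegral.integral_comp_mul_add (fun x => (U ℝ n).eval x) hd, integral_eval_U,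
    smul_eq_mul]
  field_simp

lemma integral_chord_eval_U_ridge (n : ℕ) (γ t : ℝ) :
    ∫ y in -sin t..sin t, (U ℝ n).eval (cos t * cos γ + y * sin γ) =
      2 * sin ((n + 1) * t) * (U ℝ n).eval (cos γ) / (n + 1) := by
  by_cases hγ : sin γ = 0
  · have hcos : cos γ = 1 ∨ cos γ = -1 := sq_eq_one_iff.mp (by nlinarith [sin_sq_add_cos_sq γ])
    have hUt := U_real_cos t n
    push_cast at hUt
    simp only [hγ, mul_zero, add_zero, intervalIntegral.integral_const, smul_eq_mul]
    rcases hcos with h | h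
    · rw [h, mul_one, U_eval_one]
      push_cast
      field_simp
      linear_combination 2 * hUt
    · rw [h, mul_neg_one, U_eval_neg, U_eval_neg, U_eval_one]
      push_cast
      rw [mul_div_assoc, mul_div_cancel_right₀ _ (by positivity)]
      linear_combination 2 * ((n : ℤ).negOnePow : ℝ) * hUt
  · rw [integral_eval_U_affine n _ _ _ _ hγ,
      show cos t * cos γ + sin t * sin γ = cos (t - γ) by rw [cos_sub],
      show cos t * cos γ + -sin t * sin γ = cos (t + γ) by rw [cos_add]; ring,
      T_real_cos, T_real_cos, cos_sub_cos]
    have hUγ := U_real_cos γ n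
    push_cast at hUγ ⊢
    rw [show ((n + 1) * (t - γ) + (n + 1) * (t + γ)) / 2 = (n + 1) * t by ring,
      show ((n + 1) * (t - γ) - (n + 1) * (t + γ)) / 2 = -((n + 1) * γ) by ring, sin_neg, ← hUγ]
    field_simp

def unitDisk : Set (ℝ × ℝ) := {p | p.1 ^ 2 + p.2 ^ 2 ≤ 1}

lemma measurableSet_unitDisk : MeasurableSet unitDisk :=
  measurableSet_le (by fun_prop) measurable_const

lemma isCompact_unitDisk : IsCompact unitDisk := by
  refine (isCompact_Icc (a := ((-1 : ℝ), (-1 : ℝ))) (b := (1, 1))).of_isClosed_subset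
    (isClosed_le (by fun_prop) continuous_const) fun p hp => ?_
  simp only [unitDisk, mem_ofPred_eq] at hp
  constructor <;> constructor <;> simp <;> nlinarith

lemma setOf_sq_add_sq_le_one {x : ℝ} (hx : x ^ 2 ≤ 1) :
    {y : ℝ | x ^ 2 + y ^ 2 ≤ 1} = Icc (-√(1 - x ^ 2)) √(1 - x ^ 2) := by
  ext y
  rw [mem_ofPred_eq, mem_Icc, ← abs_le, le_sqrt (abs_nonneg y) (by linarith), sq_abs]
  constructor <;> intro h <;> linarith

noncomputable def planeRotation (α : ℝ) : ℝ × ℝ →ₗ[ℝ] ℝ × ℝ :=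
  Matrix.toLin (Module.Basis.finTwoProd ℝ) (Module.Basis.finTwoProd ℝ)
    !![cos α, -sin α; sin α, cos α]

lemma planeRotation_apply (α : ℝ) (p : ℝ × ℝ) :
    planeRotation α p = (p.1 * cos α - p.2 * sin α, p.1 * sin α + p.2 * cos α) := by
  simp only [planeRotation, Matrix.toLin_finTwoProd_apply, Prod.mk.injEq]
  constructor <;> ring

lemma det_planeRotation (α : ℝ) : LinearMap.det (planeRotation α) = 1 := by
  rw [planeRotation, LinearMap.det_toLin, Matrix.det_fin_two_of]
  linear_combination sin_sq_add_cos_sq α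

lemma measurePreserving_planeRotation (α : ℝ) : MeasurePreserving (planeRotation α) :=
  ⟨(planeRotation α).continuous_of_finiteDimensional.measurable, by
    rw [Measure.map_linearMap_addHaar_eq_smul_addHaar _ (by simp [det_planeRotation]),
      det_planeRotation]
    simp⟩

lemma measurableEmbedding_planeRotation (α : ℝ) : MeasurableEmbedding (planeRotation α) :=
  ((planeRotation α).equivOfDetNeZero (by simp [det_planeRotation])).toContinuousLinearEquiv
    |>.toHomeomorph.measurableEmbedding

lemma preimage_planeRotation_unitDisk (α : ℝ) : planeRotation α ⁻¹' unitDisk = unitDisk := by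
  ext p
  simp only [unitDisk, mem_preimage, mem_ofPred_eq, planeRotation_apply]
  constructor <;> intro h <;> nlinarith [sin_sq_add_cos_sq α]

section

variable {E : Type*} [NormedAddCommGroup E] [NormedSpace ℝ E]

lemma setIntegral_unitDisk_eq_integral_Icc {F : ℝ × ℝ → E} (hF : IntegrableOn F unitDisk) :
    ∫ p in unitDisk, F p = ∫ x in Icc (-1) 1, ∫ y in -√(1 - x ^ 2)..√(1 - x ^ 2), F (x, y) := by
  have hslice : ∀ x, ∫ y, unitDisk.indicator F (x, y) = (Icc (-1) 1).indicator
      (fun x => ∫ y in -√(1 - x ^ 2)..√(1 - x ^ 2), F (x, y)) x := by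
    intro x
    by_cases hx : x ∈ Icc (-1) 1
    · have hx2 : x ^ 2 ≤ 1 := by rw [sq_le_one_iff_abs_le_one, abs_le]; exact hx
      rw [indicator_of_mem hx, intervalIntegral.integral_of_le (by simp [sqrt_nonneg]),
        ← integral_Icc_eq_integral_Ioc, ← setOf_sq_add_sq_le_one hx2,
        ← integral_indicator (measurableSet_le (by fun_prop) measurable_const)]
      rfl
    · have hout : ∀ y, (x, y) ∉ unitDisk := fun y hy => by
        simp only [unitDisk, mem_ofPred_eq] at hy
        exact hx ⟨by nlinarith, by nlinarith⟩
      simp [indicator_of_notMem hx, indicator_of_notMem (hout _)]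
  rw [← integral_indicator measurableSet_unitDisk, Measure.volume_eq_prod,
    integral_prod _ ((integrable_indicator_iff measurableSet_unitDisk).2 hF)]
  simp_rw [hslice]
  rw [integral_indicator measurableSet_Icc]

lemma setIntegral_unitDisk_eq_integral_chords {F : ℝ × ℝ → E} (hF : IntegrableOn F unitDisk) :
    ∫ p in unitDisk, F p = ∫ t in 0..π, sin t • ∫ y in -sin t..sin t, F (cos t, y) := by
  rw [setIntegral_unitDisk_eq_integral_Icc hF, ← bijOn_cos.image_eq,
    integral_image_eq_integral_abs_deriv_smul measurableSet_Icc
      (fun t _ => (hasDerivAt_cos t).hasDerivWithinAt) injOn_cos,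
    intervalIntegral.integral_of_le pi_pos.le, ← integral_Icc_eq_integral_Ioc]
  refine setIntegral_congr_fun measurableSet_Icc fun t ht => ?_
  have hsin : 0 ≤ sin t := sin_nonneg_of_nonneg_of_le_pi ht.1 ht.2
  simp only [abs_neg, abs_of_nonneg hsin, ← sin_sq, sqrt_sq hsin]

lemma setIntegral_unitDisk_comp_planeRotation (α : ℝ) (F : ℝ × ℝ → E) :
    ∫ p in unitDisk, F (planeRotation α p) = ∫ p in unitDisk, F p := by
  simpa only [preimage_planeRotation_unitDisk] using
    (measurePreserving_planeRotation α).setIntegral_preimage_emb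
      (measurableEmbedding_planeRotation α) F unitDisk

end

lemma setIntegral_unitDisk_eval_U_mul_eval_U_ridge (m n : ℕ) (γ : ℝ) :
    ∫ p in unitDisk, (U ℝ m).eval p.1 * (U ℝ n).eval (p.1 * cos γ + p.2 * sin γ) =
      if m = n then π * (U ℝ n).eval (cos γ) / (n + 1) else 0 := by
  have hcont : Continuous fun p : ℝ × ℝ =>
      (U ℝ m).eval p.1 * (U ℝ n).eval (p.1 * cos γ + p.2 * sin γ) := by fun_prop
  rw [setIntegral_unitDisk_eq_integral_chords
    (hcont.continuousOn.integrableOn_compact isCompact_unitDisk)]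
  have hchord : ∀ t, sin t • ∫ y in -sin t..sin t,
      (U ℝ m).eval (cos t) * (U ℝ n).eval (cos t * cos γ + y * sin γ) =
      sin ((m + 1) * t) * sin ((n + 1) * t) * (2 * (U ℝ n).eval (cos γ) / (n + 1)) := fun t => by
    have hUm := U_real_cos t m
    push_cast at hUm
    rw [intervalIntegral.integral_const_mul, integral_chord_eval_U_ridge, smul_eq_mul, ← hUm]
    ring
  simp_rw [hchord]
  rw [intervalIntegral.integral_mul_const, integral_sin_nat_succ_mul_mul_sin]
  split_ifs <;> ring

lemma setIntegral_unitDisk_eval_U_ridge_mul_eval_U_ridge (m n : ℕ) (α β : ℝ) :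
    ∫ p in unitDisk, (U ℝ m).eval (p.1 * cos α + p.2 * sin α) *
        (U ℝ n).eval (p.1 * cos β + p.2 * sin β) =
      if m = n then π * (U ℝ n).eval (cos (β - α)) / (n + 1) else 0 := by
  rw [← setIntegral_unitDisk_eval_U_mul_eval_U_ridge,
    ← setIntegral_unitDisk_comp_planeRotation α]
  congr with p
  rw [planeRotation_apply, cos_sub, sin_sub]
  congr 2
  · linear_combination p.1 * sin_sq_add_cos_sq α
  · ring

lemma eval_U_cos_sub_mul_pi_div {k j j' : ℕ} (hj : j ≤ k) (hj' : j' ≤ k) :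
    (U ℝ k).eval (cos (j' * π / (k + 1) - j * π / (k + 1))) = if j = j' then k + 1 else 0 := by
  split_ifs with hjj
  · rw [hjj, sub_self, cos_zero, U_eval_one]
    push_cast
    ring
  have hk : (0 : ℝ) < k + 1 := by positivity
  set γ := j' * π / (k + 1) - j * π / (k + 1) with hγ
  have hγ_bound : |γ| < π := by
    rw [hγ, ← sub_div, abs_div, abs_of_pos hk, div_lt_iff₀ hk, ← sub_mul, abs_mul,
      abs_of_pos pi_pos, mul_comm]
    gcongr
    have : (j : ℝ) ≤ k := by exact_mod_cast hj
    have : (j' : ℝ) ≤ k := by exact_mod_cast hj'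
    rw [abs_sub_lt_iff]
    constructor <;> linarith [j.cast_nonneg (α := ℝ), j'.cast_nonneg (α := ℝ)]
  have hsin : sin γ ≠ 0 := by
    rw [Ne, sin_eq_zero_iff_of_lt_of_lt (neg_lt_of_abs_lt hγ_bound) (lt_of_abs_lt hγ_bound), hγ,
      sub_eq_zero, div_left_inj' hk.ne', mul_left_inj' pi_ne_zero, Nat.cast_inj]
    exact Ne.symm hjj
  have hmul : (k + 1) * γ = ((j' - j : ℤ) : ℝ) * π := by
    rw [hγ]
    push_cast
    field_simp
  have hU := U_real_cos γ k
  push_cast at hU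
  rw [hmul, sin_int_mul_pi] at hU
  exact_mod_cast (mul_eq_zero.mp hU).resolve_right hsin

/-- Orthonormality of the ridge Chebyshev polynomials on the closed unit disk:
for `θ_{j,k} = jπ/(k+1)` (`0 ≤ j ≤ k`) and `U_m` the Chebyshev polynomial of the
second kind, `(1/π)∫∫_D U_k(x cos θ_{j,k} + y sin θ_{j,k}) ·
U_{k'}(x cos θ_{j',k'} + y sin θ_{j',k'}) dx dy = δ_{(j,k),(j',k')}`. -/
theorem ridge_chebyshev_orthonormal (k k' j j' : ℕ) (hj : j ≤ k) (hj' : j' ≤ k') :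
    (1 / π) *
      ∫ p in {p : ℝ × ℝ | p.1 ^ 2 + p.2 ^ 2 ≤ 1},
        (Polynomial.Chebyshev.U ℝ k).eval
            (p.1 * Real.cos (j * π / (k + 1)) + p.2 * Real.sin (j * π / (k + 1))) *
          (Polynomial.Chebyshev.U ℝ k').eval
            (p.1 * Real.cos (j' * π / (k' + 1)) + p.2 * Real.sin (j' * π / (k' + 1))) =
      if (j, k) = (j', k') then 1 else 0 := by
  rw [← unitDisk, setIntegral_unitDisk_eval_U_ridge_mul_eval_U_ridge]
  by_cases hk : k = k'
  · subst hk
    rw [if_pos rfl, eval_U_cos_sub_mul_pi_div hj hj']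
    by_cases hjj : j = j'
    · simp [hjj, field]
    · simp [hjj]
  · simp [hk]
end
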